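/- arXiv:2002.01297 — 8 statements merged into one kernel-verified Lean document; each statement's English description precedes it below -/
import Mathlib

section
/- For all positive integers ℓ and n, the induced Ramsey number of two stars satisfies IR(K_{1,ℓ}, K_{1,n}) = n + ℓ. -/
open SimpleGraph

def ArrowsInd {V α β : Type*} (F : SimpleGraph V) (H : SimpleGraph α) (G : SimpleGraph β) : Prop :=
  ∀ c : Sym2 V → Bool,
    (∃ f : H ↪g F, ∀ u v, H.Adj u v → c s(f u, f v) = true) ∨
    (∃ g : G ↪g F, ∀ u v, G.Adj u v → c s(g u, g v) = false)

noncomputable def IR {α β : Type*} (H : SimpleGraph α) (G : SimpleGraph β) : ℕ :=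
  sInf {N : ℕ | ∃ F : SimpleGraph (Fin N), ArrowsInd F H G}

def StarGraph (n : ℕ) : SimpleGraph (Fin 1 ⊕ Fin n) := completeBipartiteGraph (Fin 1) (Fin n)

/-!
The star `K_{1, ℓ + n - 1}` arrows the pair: its centre has `ℓ + n - 1` edges, so `ℓ` of them are
red or `n` are blue, and any set of leaves spans an induced star.

Conversely, place the `N = ℓ + n - 1` vertices of an arbitrary graph `F` on the cycle `ZMod N` and
colour by circular distance so that every vertex has fewer than `ℓ` red and fewer than `n` blue
edges: this splits `K_N` into an `(ℓ - 1)`-regular and an `(n - 1)`-regular circulant graph, the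
antipodal matching going to the odd degree when `N` is even. When `ℓ - 1` and `n - 1` are both odd,
`N` is odd and no such splitting exists; instead the red graph takes every other edge of the
Hamiltonian cycle, and the one vertex with two blue cycle edges is chosen to have a non-neighbour
among them. This is possible unless `F` is complete, and a complete graph has no induced star with
two leaves at all.
-/

open Finset

section Arrows

variable {V W α β : Type*} {F : SimpleGraph V} {H : SimpleGraph α} {G : SimpleGraph β}

theorem ArrowsInd.swap (h : ArrowsInd F H G) : ArrowsInd F G H := by
  intro c
  rcases h (fun e => !c e) with ⟨f, hf⟩ | ⟨g, hg⟩
  · exact Or.inr ⟨f, fun u v huv => by simpa using hf u v huv⟩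
  · exact Or.inl ⟨g, fun u v huv => by simpa using hg u v huv⟩

theorem ArrowsInd.map (f : V ↪ W) (h : ArrowsInd F H G) : ArrowsInd (F.map f) H G := by
  intro c
  rcases h (c ∘ Sym2.map f) with ⟨e, he⟩ | ⟨e, he⟩
  · exact Or.inl ⟨(Embedding.map f F).comp e, he⟩
  · exact Or.inr ⟨(Embedding.map f F).comp e, he⟩

end Arrows

section Star

variable {V : Type*} {F : SimpleGraph V} {k : ℕ}

theorem starGraph_adj_inl_inr (x : Fin 1) (i : Fin k) : (StarGraph k).Adj (.inl x) (.inr i) := by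
  simp [StarGraph]

theorem card_le_of_starGraph_embedding (f : StarGraph k ↪g F) {S : Finset V}
    (hS : ∀ i, f (.inr i) ∈ S) : k ≤ S.card := by
  simpa using card_le_card_of_injOn (s := univ) (fun i => f (.inr i)) (fun i _ => hS i)
    (fun i _ j _ h => Sum.inr_injective (f.injective h))

theorem not_starGraph_embedding_of_complete (hk : 2 ≤ k) (hF : ∀ x y, x ≠ y → F.Adj x y)
    (f : StarGraph k ↪g F) : False := by
  have hne : (Sum.inr ⟨0, by omega⟩ : Fin 1 ⊕ Fin k) ≠ .inr ⟨1, by omega⟩ := by simp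
  simpa [StarGraph] using f.map_adj_iff.mp (hF _ _ (f.injective.ne hne))

theorem not_starGraph_embedding_of_forall_exists_finset {P : V → V → Prop}
    (hP : ∀ v, ∃ S : Finset V, S.card < k ∧ ∀ u, F.Adj v u → P v u → u ∈ S)
    (f : StarGraph k ↪g F) (hf : ∀ i, P (f (.inl 0)) (f (.inr i))) : False := by
  obtain ⟨S, hcard, hS⟩ := hP (f (.inl 0))
  have := card_le_of_starGraph_embedding f fun i =>
    hS _ (f.map_adj_iff.mpr (starGraph_adj_inl_inr 0 i)) (hf i)
  omega

theorem not_arrowsInd_starGraph (R : SimpleGraph V) {k l : ℕ}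
    (hred : ∀ v, ∃ S : Finset V, S.card < k ∧ ∀ u, F.Adj v u → R.Adj v u → u ∈ S)
    (hblue : ∀ v, ∃ S : Finset V, S.card < l ∧ ∀ u, F.Adj v u → ¬ R.Adj v u → u ∈ S) :
    ¬ ArrowsInd F (StarGraph k) (StarGraph l) := by
  classical
  intro h
  rcases h fun e => decide (e ∈ R.edgeSet) with ⟨f, hf⟩ | ⟨g, hg⟩
  · exact not_starGraph_embedding_of_forall_exists_finset hred f fun i => by
      simpa using hf _ _ (starGraph_adj_inl_inr 0 i)
  · exact not_starGraph_embedding_of_forall_exists_finset hblue g fun i => by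
      simpa using hg _ _ (starGraph_adj_inl_inr 0 i)

end Star

namespace ZMod

variable {N : ℕ}

def circDist (x y : ZMod N) : ℕ := (y - x).valMinAbs.natAbs

theorem circDist_comm (x y : ZMod N) : circDist x y = circDist y x := by
  rw [circDist, circDist, ← neg_sub, natAbs_valMinAbs_neg]

theorem eq_add_or_eq_sub_circDist (x y : ZMod N) : y = x + circDist x y ∨ y = x - circDist x y := by
  have hy : y = x + ((y - x).valMinAbs : ZMod N) := by rw [coe_valMinAbs]; ring
  rcases Int.natAbs_eq (y - x).valMinAbs with h | h
  · left; rwa [h, Int.cast_natCast] at hy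
  · right; rwa [h, Int.cast_neg, Int.cast_natCast, ← sub_eq_add_neg] at hy

theorem circDist_pos {x y : ZMod N} (h : x ≠ y) : 0 < circDist x y := by
  simpa [circDist, valMinAbs_eq_zero, sub_eq_zero] using h.symm

theorem two_mul_circDist_le [NeZero N] (x y : ZMod N) : 2 * circDist x y ≤ N := by
  have := natAbs_valMinAbs_le (y - x)
  rw [circDist]; omega

theorem sub_natCast_eq_add_natCast {m : ℕ} (h : 2 * m = N) (x : ZMod N) :
    x - m = x + m := by
  have hm : (m : ZMod N) + m = 0 := by rw [← Nat.cast_add, ← two_mul, h, natCast_self]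
  rw [sub_eq_add_neg, neg_eq_of_add_eq_zero_right hm]

variable [NeZero N]

def annulus (v : ZMod N) (lo hi : ℕ) : Finset (ZMod N) :=
  {u | circDist v u ∈ Icc lo hi}

theorem mem_annulus {v u : ZMod N} {lo hi : ℕ} :
    u ∈ annulus v lo hi ↔ lo ≤ circDist v u ∧ circDist v u ≤ hi := by
  simp [annulus]

theorem card_annulus_le (v : ZMod N) (lo hi : ℕ) :
    (annulus v lo hi).card ≤ 2 * (hi + 1 - lo) := by
  have hsub : annulus v lo hi ⊆
      (Icc lo hi).image (fun d : ℕ => v + d) ∪ (Icc lo hi).image (fun d : ℕ => v - d) := by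
    intro u hu
    have hd : circDist v u ∈ Icc lo hi := by simpa [annulus] using hu
    rcases eq_add_or_eq_sub_circDist v u with h | h
    · exact mem_union_left _ (mem_image.mpr ⟨_, hd, h.symm⟩)
    · exact mem_union_right _ (mem_image.mpr ⟨_, hd, h.symm⟩)
  calc (annulus v lo hi).card
      ≤ ((Icc lo hi).image (fun d : ℕ => v + d)).card +
          ((Icc lo hi).image (fun d : ℕ => v - d)).card :=
        (card_le_card hsub).trans (card_union_le _ _)
    _ ≤ (Icc lo hi).card + (Icc lo hi).card := add_le_add card_image_le card_image_le
    _ = 2 * (hi + 1 - lo) := by rw [Nat.card_Icc]; ring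

theorem odd_val_sub_one_iff (hN : Odd N) (v : ZMod N) :
    Odd (v - 1).val ↔ v ≠ 0 ∧ ¬ Odd v.val := by
  obtain ⟨m, rfl⟩ : ∃ m, N = m + 1 := Nat.exists_eq_add_one_of_ne_zero (NeZero.ne N)
  rcases eq_or_ne v 0 with rfl | hv
  · simpa [val_neg_one, Nat.odd_add_one] using hN
  · have hpos : 0 < v.val := val_pos.mpr hv
    have hm : 1 % (m + 1) = 1 := Nat.mod_eq_of_lt (by have := val_lt v; omega)
    rw [val_sub (by rw [val_one_eq_one_mod, hm]; omega), val_one_eq_one_mod, hm,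
      Nat.odd_sub (by omega)]
    simp [hv]

variable {p q : ℕ}

theorem not_arrowsInd_even_even (hN : N = 2 * p + 2 * q + 1) (F : SimpleGraph (ZMod N)) :
    ¬ ArrowsInd F (StarGraph (2 * p + 1)) (StarGraph (2 * q + 1)) := by
  refine not_arrowsInd_starGraph (fromRel fun x y => circDist x y ≤ p)
    (fun v => ⟨annulus v 1 p, ?_, fun u huv hR => ?_⟩)
    (fun v => ⟨annulus v (p + 1) (p + q), ?_, fun u huv hR => ?_⟩)
  · have := card_annulus_le v 1 p; omega
  · simp only [fromRel_adj, circDist_comm u v, or_self] at hR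
    exact mem_annulus.mpr ⟨circDist_pos hR.1, hR.2⟩
  · have := card_annulus_le v (p + 1) (p + q); omega
  · simp only [fromRel_adj, circDist_comm u v, or_self, huv.ne, ne_eq, not_false_eq_true, true_and,
      not_le] at hR
    have := two_mul_circDist_le v u
    exact mem_annulus.mpr ⟨hR, by omega⟩

theorem not_arrowsInd_odd_even (hN : N = 2 * p + 2 * q + 2) (F : SimpleGraph (ZMod N)) :
    ¬ ArrowsInd F (StarGraph (2 * p + 2)) (StarGraph (2 * q + 1)) := by
  refine not_arrowsInd_starGraph
    (fromRel fun x y => circDist x y ≤ p ∨ circDist x y = p + q + 1)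
    (fun v => ⟨insert (v + (p + q + 1 : ℕ)) (annulus v 1 p), ?_, fun u huv hR => ?_⟩)
    (fun v => ⟨annulus v (p + 1) (p + q), ?_, fun u huv hR => ?_⟩)
  · have := card_annulus_le v 1 p
    have := card_insert_le (v + (p + q + 1 : ℕ)) (annulus v 1 p)
    omega
  · simp only [fromRel_adj, circDist_comm u v, or_self] at hR
    obtain ⟨hne, hle | hanti⟩ := hR
    · exact mem_insert_of_mem (mem_annulus.mpr ⟨circDist_pos hne, hle⟩)
    · have hsub := sub_natCast_eq_add_natCast (show 2 * (p + q + 1) = N by omega) v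
      refine mem_insert.mpr (Or.inl ?_)
      rcases eq_add_or_eq_sub_circDist v u with h | h <;> rw [h, hanti]
      exact hsub
  · have := card_annulus_le v (p + 1) (p + q); omega
  · simp only [fromRel_adj, circDist_comm u v, or_self, huv.ne, ne_eq, not_false_eq_true, true_and,
      not_or, not_le] at hR
    have := two_mul_circDist_le v u
    exact mem_annulus.mpr ⟨hR.1, by omega⟩

/-- Since `N` is odd, alternating the colours along the cycle `0, 1, …, N - 1, 0` leaves both cycle
edges at `0` blue; this is harmless because `0` and `1` are not adjacent in `F`. -/
theorem not_arrowsInd_odd_odd_of_not_adj (hN : N = 2 * p + 2 * q + 3) (F : SimpleGraph (ZMod N))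
    (h01 : ¬ F.Adj 0 1) : ¬ ArrowsInd F (StarGraph (2 * p + 2)) (StarGraph (2 * q + 2)) := by
  have hodd : Odd N := ⟨p + q + 1, by omega⟩
  refine not_arrowsInd_starGraph
    (fromRel fun x y => (y = x + 1 ∧ Odd x.val) ∨ (q + 2 ≤ circDist x y ∧ circDist x y ≤ p + q + 1))
    (fun v => ⟨insert (if Odd v.val then v + 1 else v - 1) (annulus v (q + 2) (p + q + 1)),
      ?_, fun u huv hR => ?_⟩)
    (fun v => ⟨insert (if Odd v.val ∨ v = 0 then v - 1 else v + 1) (annulus v 2 (q + 1)),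
      ?_, fun u huv hR => ?_⟩)
  · have := card_annulus_le v (q + 2) (p + q + 1)
    have := card_insert_le (if Odd v.val then v + 1 else v - 1) (annulus v (q + 2) (p + q + 1))
    omega
  · simp only [fromRel_adj, circDist_comm u v] at hR
    rcases hR with ⟨-, (⟨rfl, hv⟩ | hd) | (⟨hvu, hu⟩ | hd)⟩
    · simp [hv]
    · exact mem_insert_of_mem (mem_annulus.mpr hd)
    · obtain rfl : u = v - 1 := eq_sub_of_add_eq hvu.symm
      simp [((odd_val_sub_one_iff hodd v).mp hu).2]
    · exact mem_insert_of_mem (mem_annulus.mpr hd)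
  · have := card_annulus_le v 2 (q + 1)
    have := card_insert_le (if Odd v.val ∨ v = 0 then v - 1 else v + 1) (annulus v 2 (q + 1))
    omega
  · simp only [fromRel_adj, circDist_comm u v, huv.ne, ne_eq, not_false_eq_true, true_and, not_or,
      not_and, not_le] at hR
    obtain ⟨⟨hcyc, hfar⟩, hcyc', -⟩ := hR
    have hpos := circDist_pos huv.ne
    have := two_mul_circDist_le v u
    have hnear : circDist v u ≤ q + 1 := by
      by_contra! h
      have := hfar h
      omega
    rcases Nat.lt_or_ge (circDist v u) 2 with h1 | h2
    · have hd : circDist v u = 1 := by omega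
      refine mem_insert.mpr (Or.inl ?_)
      rcases eq_add_or_eq_sub_circDist v u with hu | hu <;> rw [hd, Nat.cast_one] at hu <;> subst hu
      · have hv0 : v ≠ 0 := by rintro rfl; exact h01 (by simpa using huv)
        simp [hv0, fun h => hcyc rfl h]
      · have := (odd_val_sub_one_iff hodd v).not.mp (hcyc' (sub_add_cancel v 1).symm)
        rw [if_pos (by tauto)]
    · exact mem_insert_of_mem (mem_annulus.mpr ⟨h2, hnear⟩)

theorem not_arrowsInd_odd_odd (hN : N = 2 * p + 2 * q + 3) (F : SimpleGraph (ZMod N)) :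
    ¬ ArrowsInd F (StarGraph (2 * p + 2)) (StarGraph (2 * q + 2)) := by
  intro h
  by_cases hF : ∀ x y, x ≠ y → F.Adj x y
  · rcases h fun _ => true with ⟨f, -⟩ | ⟨g, -⟩
    · exact not_starGraph_embedding_of_complete (by omega) hF f
    · exact not_starGraph_embedding_of_complete (by omega) hF g
  push Not at hF
  obtain ⟨x, y, hxy, hnadj⟩ := hF
  have hzero_ne_one : (0 : ZMod N) ≠ 1 := by
    have : Fact (1 < N) := ⟨by omega⟩
    exact zero_ne_one
  obtain ⟨σ, hσx, hσy⟩ := MulAction.is_two_pretransitive_iff.mp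
    (Equiv.Perm.isMultiplyPretransitive (ZMod N) 2) hxy hzero_ne_one
  refine not_arrowsInd_odd_odd_of_not_adj hN (F.map σ.toEmbedding) ?_ (h.map σ.toEmbedding)
  rwa [← hσx, ← hσy, Equiv.Perm.smul_def, Equiv.Perm.smul_def, ← Equiv.coe_toEmbedding,
    map_adj_apply]

theorem not_arrowsInd_starGraph_add_one (a b : ℕ) (F : SimpleGraph (ZMod (a + b + 1))) :
    ¬ ArrowsInd F (StarGraph (a + 1)) (StarGraph (b + 1)) := by
  obtain ⟨p, rfl | rfl⟩ := Nat.even_or_odd' a <;> obtain ⟨q, rfl | rfl⟩ := Nat.even_or_odd' b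
  · exact not_arrowsInd_even_even rfl F
  · exact fun h => not_arrowsInd_odd_even (by omega) F h.swap
  · exact not_arrowsInd_odd_even (by omega) F
  · exact not_arrowsInd_odd_odd (by omega) F

end ZMod

theorem not_arrowsInd_starGraph_of_card_le {V : Type*} [Fintype V] (a b : ℕ) (F : SimpleGraph V)
    (hV : Fintype.card V ≤ a + b + 1) : ¬ ArrowsInd F (StarGraph (a + 1)) (StarGraph (b + 1)) := by
  obtain ⟨e⟩ := Function.Embedding.nonempty_of_card_le (β := ZMod (a + b + 1)) (by simpa using hV)
  exact fun h => ZMod.not_arrowsInd_starGraph_add_one a b (F.map e) (h.map e)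

section Upper

variable {k m : ℕ}

def starGraphEmbedding (g : Fin k ↪ Fin m) : StarGraph k ↪g StarGraph m :=
  ⟨(Function.Embedding.refl _).sumMap g, by rintro (x | x) (y | y) <;> simp [StarGraph]⟩

theorem exists_monochromatic_starGraph_embedding (c : Sym2 (Fin 1 ⊕ Fin m) → Bool) (t : Bool)
    (h : k ≤ #{i | c s(.inl 0, .inr i) = t}) :
    ∃ f : StarGraph k ↪g StarGraph m, ∀ u w, (StarGraph k).Adj u w → c s(f u, f w) = t := by
  refine ⟨starGraphEmbedding (orderEmbOfCardLe _ h).toEmbedding, ?_⟩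
  rintro (x | i) (y | j) huw
  · simp [StarGraph] at huw
  · simpa [Subsingleton.elim x 0, starGraphEmbedding] using orderEmbOfCardLe_mem _ h j
  · simpa [Subsingleton.elim y 0, starGraphEmbedding, Sym2.eq_swap] using orderEmbOfCardLe_mem _ h i
  · simp [StarGraph] at huw

theorem arrowsInd_starGraph (k l : ℕ) :
    ArrowsInd (StarGraph (k + l + 1)) (StarGraph (k + 1)) (StarGraph (l + 1)) := by
  intro c
  have hsplit := card_filter_add_card_filter_not (s := univ)
    (fun i : Fin (k + l + 1) => c s(.inl 0, .inr i) = true)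
  simp only [Bool.not_eq_true, card_univ, Fintype.card_fin] at hsplit
  by_cases hk : k + 1 ≤ #{i | c s(.inl 0, .inr i) = true}
  · exact Or.inl (exists_monochromatic_starGraph_embedding c true hk)
  · exact Or.inr (exists_monochromatic_starGraph_embedding c false (by omega))

end Upper

theorem ir_eq_of_arrowsInd_of_forall_lt {α β : Type*} {H : SimpleGraph α} {G : SimpleGraph β}
    {N : ℕ} (hup : ∃ F : SimpleGraph (Fin N), ArrowsInd F H G)
    (hlow : ∀ m < N, ∀ F : SimpleGraph (Fin m), ¬ ArrowsInd F H G) : IR H G = N :=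
  IsLeast.csInf_eq ⟨hup, fun m ⟨F, hF⟩ => not_lt.mp fun hm => hlow m hm F hF⟩

/-- For all positive integers ℓ and n, IR(K_{1,ℓ}, K_{1,n}) = n + ℓ. -/
theorem induced_ramsey_star_star (ℓ n : ℕ) (hℓ : 0 < ℓ) (hn : 0 < n) :
    IR (StarGraph ℓ) (StarGraph n) = n + ℓ := by
  obtain ⟨a, rfl⟩ := Nat.exists_eq_add_one_of_ne_zero hℓ.ne'
  obtain ⟨b, rfl⟩ := Nat.exists_eq_add_one_of_ne_zero hn.ne'
  refine ir_eq_of_arrowsInd_of_forall_lt ?_ fun m hm F =>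
    not_arrowsInd_starGraph_of_card_le a b F (by simp; omega)
  let e : Fin 1 ⊕ Fin (a + b + 1) ≃ Fin (b + 1 + (a + 1)) :=
    finSumFinEquiv.trans (finCongr (by omega))
  exact ⟨_, (arrowsInd_starGraph a b).map e.toEmbedding⟩
end

section
/- For all positive integers ℓ and n, every graph G on fewer than n + ℓ vertices admits a 2-coloring of its edges with colors red and blue that contains no induced subgraph isomorphic to K_{1,ℓ} all of whose edges are red and no induced subgraph isomorphic to K_{1,n} all of whose edges are blue. -/
open SimpleGraph

/-- A monochromatic induced star witness inside a vertex set `s`. -/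
def HasStar {V : Type*} (G : SimpleGraph V) (c : Sym2 V → Bool) (b : Bool) (m : ℕ)
    (s : Finset V) : Prop :=
  ∃ v ∈ s, ∃ A : Finset V, A ⊆ s ∧ A.card = m ∧ (∀ a ∈ A, G.Adj v a ∧ c s(v, a) = b) ∧
    ∀ a ∈ A, ∀ a' ∈ A, a ≠ a' → ¬ G.Adj a a'

/-- `u` already has an independent monochromatic set of size `m` in `t`, all non-adjacent
to the new vertex `v`. -/
def Full {V : Type*} (G : SimpleGraph V) (c : Sym2 V → Bool) (b : Bool) (m : ℕ)
    (t : Finset V) (v u : V) : Prop :=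
  ∃ A : Finset V, A ⊆ t ∧ A.card = m ∧ (∀ x ∈ A, G.Adj u x ∧ c s(u, x) = b) ∧
    (∀ x ∈ A, ¬ G.Adj v x) ∧ ∀ x ∈ A, ∀ y ∈ A, x ≠ y → ¬ G.Adj x y

lemma key {V : Type*} (G : SimpleGraph V) (ℓ n : ℕ) (hℓ : 0 < ℓ) (hn : 0 < n) :
    ∀ s : Finset V, s.card + 1 ≤ n + ℓ →
      ∃ c : Sym2 V → Bool, ¬ HasStar G c true ℓ s ∧ ¬ HasStar G c false n s := by
  classical
  intro s
  induction s using Finset.induction_on with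
  | empty =>
    intro _
    refine ⟨fun _ => true, ?_, ?_⟩ <;> · rintro ⟨v, hv, -⟩; simp at hv
  | @insert v t hvt ih =>
    intro hcard
    rw [Finset.card_insert_of_notMem hvt] at hcard
    obtain ⟨c', hred', hblue'⟩ := ih (by omega)
    have htcard : t.card + 2 ≤ n + ℓ := hcard
    -- abbreviations
    set RF : V → Prop := fun u => Full G c' true (ℓ - 1) t v u with hRF
    set BF : V → Prop := fun u => Full G c' false (n - 1) t v u with hBF
    -- a vertex in t can't be full on both sides
    have notboth : ∀ u ∈ t, ¬ (RF u ∧ BF u) := by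
      rintro u hu ⟨⟨A, hAt, hAcard, hAcol, -, -⟩, ⟨B, hBt, hBcard, hBcol, -, -⟩⟩
      have hdisj : Disjoint A B := by
        rw [Finset.disjoint_left]
        intro x hxA hxB
        have := (hAcol x hxA).2
        have := (hBcol x hxB).2
        simp_all
      have huA : u ∉ A ∪ B := by
        simp only [Finset.mem_union]
        rintro (hx | hx)
        · exact G.irrefl (hAcol u hx).1
        · exact G.irrefl (hBcol u hx).1
      have hsub : insert u (A ∪ B) ⊆ t :=
        Finset.insert_subset hu (Finset.union_subset hAt hBt)
      have := Finset.card_le_card hsub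
      rw [Finset.card_insert_of_notMem huA, Finset.card_union_of_disjoint hdisj] at this
      omega
    -- free vertices
    set F : Finset V := t.filter (fun u => G.Adj v u ∧ ¬ RF u ∧ ¬ BF u) with hF
    obtain ⟨R, hRsub, hRcard⟩ := Finset.exists_subset_card_eq
      (min_le_right (ℓ - 1) F.card)
    have hFcard : F.card ≤ t.card := Finset.card_le_card (Finset.filter_subset _ _)
    -- the color of edges at v
    set g : V → Bool := fun u => if BF u then true else if RF u then false
      else decide (u ∈ R) with hg
    have hgtrue : ∀ u, g u = true → BF u ∨ (¬ RF u ∧ ¬ BF u ∧ u ∈ R) := by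
      intro u hu
      by_cases h1 : BF u
      · exact Or.inl h1
      by_cases h2 : RF u
      · simp [hg, h1, h2] at hu
      · refine Or.inr ⟨h2, h1, ?_⟩
        simpa [hg, h1, h2] using hu
    have hgfalse : ∀ u, g u = false → ¬ BF u ∧ (RF u ∨ (¬ RF u ∧ u ∉ R)) := by
      intro u hu
      by_cases h1 : BF u
      · simp [hg, h1] at hu
      by_cases h2 : RF u
      · exact ⟨h1, Or.inl h2⟩
      · refine ⟨h1, Or.inr ⟨h2, ?_⟩⟩
        simpa [hg, h1, h2] using hu
    -- the new coloring
    set c : Sym2 V → Bool := Sym2.lift ⟨fun x y =>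
        if x = v then g y else if y = v then g x else c' s(x, y), by
      intro x y
      by_cases hx : x = v <;> by_cases hy : y = v <;>
        simp [hx, hy, Sym2.eq_swap]⟩ with hc
    have hcv : ∀ u, c s(v, u) = g u := by
      intro u; rw [hc, Sym2.lift_mk]; simp
    have hcv' : ∀ u, c s(u, v) = g u := by
      intro u; rw [Sym2.eq_swap]; exact hcv u
    have hcc : ∀ x y, x ≠ v → y ≠ v → c s(x, y) = c' s(x, y) := by
      intro x y hx hy; rw [hc, Sym2.lift_mk]; simp [hx, hy]
    refine ⟨c, ?_, ?_⟩
    -- no red star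
    · rintro ⟨w, hw, A, hAs, hAcard, hAcol, hAind⟩
      have hvA : ∀ a ∈ A, G.Adj w a := fun a ha => (hAcol a ha).1
      by_cases hwv : w = v
      · subst hwv
        have hAt : A ⊆ t := by
          intro a ha
          rcases Finset.mem_insert.mp (hAs ha) with h | h
          · exact absurd (h ▸ (hAcol a ha).1) (G.irrefl)
          · exact h
        by_cases hBFA : ∃ a ∈ A, BF a
        · obtain ⟨a, haA, B, hBt, hBcard, hBcol, hBnadj, -⟩ := hBFA
          have hdisj : Disjoint A B := by
            rw [Finset.disjoint_left]
            intro x hxA hxB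
            exact hBnadj x hxB (hAcol x hxA).1
          have hsub : A ∪ B ⊆ t := Finset.union_subset hAt hBt
          have := Finset.card_le_card hsub
          rw [Finset.card_union_of_disjoint hdisj] at this
          omega
        · push_neg at hBFA
          have hAR : A ⊆ R := by
            intro a ha
            have hcol := (hAcol a ha).2
            rw [hcv] at hcol
            rcases hgtrue a hcol with h | ⟨-, -, h⟩
            · exact absurd h (hBFA a ha)
            · exact h
          have := Finset.card_le_card hAR
          rw [hAcard, hRcard] at this
          omega
      · have hwt : w ∈ t := Finset.mem_of_mem_insert_of_ne hw hwv
        by_cases hvmem : v ∈ A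
        · -- w is RedFull via A.erase v, but the color of s(w,v) says otherwise
          have hRFw : RF w := by
            refine ⟨A.erase v, ?_, ?_, ?_, ?_, ?_⟩
            · intro x hx
              have hxv := Finset.ne_of_mem_erase hx
              exact Finset.mem_of_mem_insert_of_ne (hAs (Finset.mem_of_mem_erase hx)) hxv
            · rw [Finset.card_erase_of_mem hvmem, hAcard]
            · intro x hx
              have hxv := Finset.ne_of_mem_erase hx
              have hxA := Finset.mem_of_mem_erase hx
              exact ⟨(hAcol x hxA).1, by rw [← hcc w x hwv hxv]; exact (hAcol x hxA).2⟩
            · intro x hx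
              exact hAind v hvmem x (Finset.mem_of_mem_erase hx)
                (Ne.symm (Finset.ne_of_mem_erase hx))
            · intro x hx y hy
              exact hAind x (Finset.mem_of_mem_erase hx) y (Finset.mem_of_mem_erase hy)
          have hcol := (hAcol v hvmem).2
          rw [hcv'] at hcol
          rcases hgtrue w hcol with h | ⟨h, -, -⟩
          · exact notboth w hwt ⟨hRFw, h⟩
          · exact h hRFw
        · -- the star lives in t, contradicting the inductive hypothesis
          refine hred' ⟨w, hwt, A, ?_, hAcard, ?_, hAind⟩
          · intro a ha
            exact Finset.mem_of_mem_insert_of_ne (hAs ha) (fun h => hvmem (h ▸ ha))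
          · intro a ha
            have hav : a ≠ v := fun h => hvmem (h ▸ ha)
            exact ⟨(hAcol a ha).1, by rw [← hcc w a hwv hav]; exact (hAcol a ha).2⟩
    -- no blue star
    · rintro ⟨w, hw, A, hAs, hAcard, hAcol, hAind⟩
      by_cases hwv : w = v
      · subst hwv
        have hAt : A ⊆ t := by
          intro a ha
          rcases Finset.mem_insert.mp (hAs ha) with h | h
          · exact absurd (h ▸ (hAcol a ha).1) (G.irrefl)
          · exact h
        by_cases hRFA : ∃ a ∈ A, RF a
        · obtain ⟨a, haA, B, hBt, hBcard, hBcol, hBnadj, -⟩ := hRFA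
          have hdisj : Disjoint A B := by
            rw [Finset.disjoint_left]
            intro x hxA hxB
            exact hBnadj x hxB (hAcol x hxA).1
          have hsub : A ∪ B ⊆ t := Finset.union_subset hAt hBt
          have := Finset.card_le_card hsub
          rw [Finset.card_union_of_disjoint hdisj] at this
          omega
        · push_neg at hRFA
          have hAFR : A ⊆ F \ R := by
            intro a ha
            have hcol := (hAcol a ha).2
            rw [hcv] at hcol
            obtain ⟨hnBF, hor⟩ := hgfalse a hcol
            rcases hor with h | ⟨hnRF, hnR⟩
            · exact absurd h (hRFA a ha)
            · refine Finset.mem_sdiff.mpr ⟨?_, hnR⟩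
              rw [hF, Finset.mem_filter]
              exact ⟨hAt ha, (hAcol a ha).1, hnRF, hnBF⟩
          have h1 := Finset.card_le_card hAFR
          rw [Finset.card_sdiff_of_subset hRsub, hAcard, hRcard] at h1
          omega
      · have hwt : w ∈ t := Finset.mem_of_mem_insert_of_ne hw hwv
        by_cases hvmem : v ∈ A
        · have hBFw : BF w := by
            refine ⟨A.erase v, ?_, ?_, ?_, ?_, ?_⟩
            · intro x hx
              have hxv := Finset.ne_of_mem_erase hx
              exact Finset.mem_of_mem_insert_of_ne (hAs (Finset.mem_of_mem_erase hx)) hxv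
            · rw [Finset.card_erase_of_mem hvmem, hAcard]
            · intro x hx
              have hxv := Finset.ne_of_mem_erase hx
              have hxA := Finset.mem_of_mem_erase hx
              exact ⟨(hAcol x hxA).1, by rw [← hcc w x hwv hxv]; exact (hAcol x hxA).2⟩
            · intro x hx
              exact hAind v hvmem x (Finset.mem_of_mem_erase hx)
                (Ne.symm (Finset.ne_of_mem_erase hx))
            · intro x hx y hy
              exact hAind x (Finset.mem_of_mem_erase hx) y (Finset.mem_of_mem_erase hy)
          have hcol := (hAcol v hvmem).2
          rw [hcv'] at hcol
          exact (hgfalse w hcol).1 hBFw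
        · refine hblue' ⟨w, hwt, A, ?_, hAcard, ?_, hAind⟩
          · intro a ha
            exact Finset.mem_of_mem_insert_of_ne (hAs ha) (fun h => hvmem (h ▸ ha))
          · intro a ha
            have hav : a ≠ v := fun h => hvmem (h ▸ ha)
            exact ⟨(hAcol a ha).1, by rw [← hcc w a hwv hav]; exact (hAcol a ha).2⟩

lemma hasStar_of_embedding {k m : ℕ} (G : SimpleGraph (Fin k)) (c : Sym2 (Fin k) → Bool)
    (b : Bool) (f : StarGraph m ↪g G)
    (hf : ∀ u v, (StarGraph m).Adj u v → c s(f u, f v) = b) :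
    HasStar G c b m Finset.univ := by
  classical
  refine ⟨f (Sum.inl 0), Finset.mem_univ _,
    Finset.univ.image (fun i : Fin m => f (Sum.inr i)), Finset.subset_univ _, ?_, ?_, ?_⟩
  · rw [Finset.card_image_of_injective _ (fun i j h => by
      simpa using Sum.inr_injective (f.injective h))]
    simp
  · intro a ha
    obtain ⟨i, -, rfl⟩ := Finset.mem_image.mp ha
    have hadj : (StarGraph m).Adj (Sum.inl 0) (Sum.inr i) := by
      simp [StarGraph]
    exact ⟨f.map_adj_iff.mpr hadj, hf _ _ hadj⟩
  · intro a ha a' ha' hne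
    obtain ⟨i, -, rfl⟩ := Finset.mem_image.mp ha
    obtain ⟨j, -, rfl⟩ := Finset.mem_image.mp ha'
    intro hadj
    have := f.map_adj_iff.mp hadj
    simp [StarGraph] at this

/-- every graph on fewer than n + ℓ vertices has a red/blue coloring with
no red induced K_{1,ℓ} and no blue induced K_{1,n}. -/
theorem good_coloring_of_small_graph (ℓ n : ℕ) (hℓ : 0 < ℓ) (hn : 0 < n)
    (k : ℕ) (hk : k < n + ℓ) (G : SimpleGraph (Fin k)) :
    ∃ c : Sym2 (Fin k) → Bool,
      (¬ ∃ f : StarGraph ℓ ↪g G, ∀ u v, (StarGraph ℓ).Adj u v → c s(f u, f v) = true) ∧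
      (¬ ∃ g : StarGraph n ↪g G, ∀ u v, (StarGraph n).Adj u v → c s(g u, g v) = false) := by
  obtain ⟨c, hr, hb⟩ := key G ℓ n hℓ hn Finset.univ (by simpa using hk)
  refine ⟨c, ?_, ?_⟩
  · rintro ⟨f, hf⟩
    exact hr (hasStar_of_embedding G c true f hf)
  · rintro ⟨f, hf⟩
    exact hb (hasStar_of_embedding G c false f hf)
end

section
/- For every graph H and every positive integer n, IR(H, K_{1,n}) ≤ |E(H)|·(n−1) + |V(H)|, where |E(H)| and |V(H)| are the numbers of edges and vertices of H. -/
open SimpleGraph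

/-!
Order the vertices of `H` and blow each vertex `v` up into an independent set of
`1 + (n - 1) b(v)` copies, where `b(v)` counts the neighbours of `v` preceding it; copies of
adjacent vertices are joined. Since `∑ b(v) ≤ |E(H)|`, this graph has at most
`|E(H)| (n - 1) + |V(H)|` vertices. In a colouring with no blue induced `K_{1,n}`, a vertex sends
at most `n - 1` blue edges into a neighbouring cluster, as that cluster is an independent set of
its neighbours. Choosing one copy of each vertex in increasing order, the earlier neighbours of
`v` rule out at most `(n - 1) b(v)` copies of `v`, so some copy is joined in red to all chosen
copies; the chosen copies span a red induced `H`.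
-/

open Finset

theorem ArrowsInd.of_embedding {V W α β : Type*} {F : SimpleGraph V} {F' : SimpleGraph W}
    {H : SimpleGraph α} {G : SimpleGraph β} (h : ArrowsInd F H G) (e : F ↪g F') :
    ArrowsInd F' H G := by
  intro c
  rcases h (c ∘ Sym2.map e) with ⟨f, hf⟩ | ⟨g, hg⟩
  · exact Or.inl ⟨e.comp f, hf⟩
  · exact Or.inr ⟨e.comp g, hg⟩

theorem IR_le_card {V α β : Type*} [Fintype V] {F : SimpleGraph V} {H : SimpleGraph α}
    {G : SimpleGraph β} (h : ArrowsInd F H G) : IR H G ≤ Fintype.card V :=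
  Nat.sInf_le ⟨F.map (Fintype.equivFin V).toEmbedding, h.of_embedding (Embedding.map _ F)⟩

def starEmbedding {V : Type*} {F : SimpleGraph V} {n : ℕ} (x : V) (z : Fin n ↪ V)
    (hxz : ∀ i, F.Adj x (z i)) (hz : ∀ i j, ¬ F.Adj (z i) (z j)) : StarGraph n ↪g F :=
  have hinj : Function.Injective (Sum.elim (fun _ => x) z) := by
    rintro (a | a) (b | b) hab
    · rw [Subsingleton.elim a b]
    · exact absurd hab (hxz _).ne
    · exact absurd hab.symm (hxz _).ne
    · exact congrArg Sum.inr (z.injective hab)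
  ⟨⟨Sum.elim (fun _ => x) z, hinj⟩, by
    rintro (a | a) (b | b) <;> simp [StarGraph, hxz, F.adj_comm (z _) x, hz]⟩

theorem card_blue_lt_of_not_blue_star {V ι : Type*} [Fintype ι] {F : SimpleGraph V} {n : ℕ}
    {c : Sym2 V → Bool}
    (hc : ¬ ∃ g : StarGraph n ↪g F, ∀ u v, (StarGraph n).Adj u v → c s(g u, g v) = false)
    (x : V) (y : ι ↪ V) (hxy : ∀ i, F.Adj x (y i)) (hy : ∀ i j, ¬ F.Adj (y i) (y j)) :
    Fintype.card {i // c s(x, y i) = false} < n := by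
  by_contra! hle
  obtain ⟨f⟩ := Function.Embedding.nonempty_of_card_le (α := Fin n) (by simpa using hle)
  let z : Fin n ↪ V := (f.trans (Function.Embedding.subtype _)).trans y
  have hz : ∀ i, c s(x, z i) = false := fun i => (f i).2
  refine hc ⟨starEmbedding x z (fun _ => hxy _) (fun _ _ => hy _ _), ?_⟩
  rintro (a | a) (b | b) hab
  · simp [StarGraph] at hab
  · exact hz b
  · exact (Sym2.eq_swap ▸ hz a :)
  · simp [StarGraph] at hab

namespace SimpleGraph

variable {α : Type*} (H : SimpleGraph α)

def blowup (m : α → ℕ) : SimpleGraph (Σ v, Fin (m v)) := H.comap Sigma.fst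

def blowupEmbedding {m : α → ℕ} (ρ : ∀ v, Fin (m v)) : H ↪g H.blowup m :=
  ⟨⟨fun v => ⟨v, ρ v⟩, fun _ _ h => congrArg Sigma.fst h⟩, Iff.rfl⟩

section Ordered

variable [LinearOrder α] [Fintype α] [DecidableRel H.Adj]

def backDegree (v : α) : ℕ := #{u | u < v ∧ H.Adj u v}

theorem sum_backDegree_le : ∑ v, H.backDegree v ≤ #H.edgeFinset := by
  calc ∑ v, H.backDegree v = #(univ.sigma fun v => {u | u < v ∧ H.Adj u v}) :=
        (card_sigma _ _).symm
    _ ≤ #H.edgeFinset := by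
      refine card_le_card_of_injOn (fun p => s(p.2, p.1)) (fun p hp => ?_) fun p hp q hq hpq => ?_
      · simp_all
      · simp only [coe_sigma, Set.mem_sigma_iff, coe_filter, Set.mem_ofPred_eq, mem_coe, mem_univ,
          true_and] at hp hq
        rcases Sym2.eq_iff.1 hpq with ⟨h1, h2⟩ | ⟨h1, h2⟩
        · exact Sigma.ext h2 (heq_of_eq h1)
        · exact absurd (h1 ▸ h2 ▸ hp.1) hq.1.asymm

theorem exists_red_in_fiber {m : α → ℕ} {d : ℕ} (hm : ∀ v, d * H.backDegree v < m v)
    {c : Sym2 (Σ v, Fin (m v)) → Bool}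
    (hblue : ∀ x v, H.Adj x.1 v → #{i | c s(x, ⟨v, i⟩) = false} ≤ d)
    (ρ : ∀ v, Fin (m v)) {a : α} {s : Finset α} (hs : ∀ u ∈ s, u < a) :
    ∃ i, ∀ u ∈ s, H.Adj u a → c s(⟨u, ρ u⟩, ⟨a, i⟩) = true := by
  by_contra! hbad
  have hcover : (univ : Finset (Fin (m a))) ⊆
      {u ∈ s | H.Adj u a}.biUnion fun u => {i | c s(⟨u, ρ u⟩, ⟨a, i⟩) = false} := by
    intro i _
    obtain ⟨u, hu, hua, hred⟩ := hbad i
    simpa using ⟨u, ⟨hu, hua⟩, Bool.eq_false_iff.2 hred⟩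
  have hback : #{u ∈ s | H.Adj u a} ≤ H.backDegree a :=
    card_le_card fun u hu => by simp_all
  have hcard := calc m a = #(univ : Finset (Fin (m a))) := (card_fin _).symm
    _ ≤ #{u ∈ s | H.Adj u a} * d :=
      (card_le_card hcover).trans <|
        card_biUnion_le_card_mul _ _ _ fun u hu => hblue _ _ (by simp_all)
    _ ≤ d * H.backDegree a := by rw [mul_comm]; gcongr
  exact (hm a).not_ge hcard

theorem exists_red_transversal {m : α → ℕ} {d : ℕ} (hm : ∀ v, d * H.backDegree v < m v)
    {c : Sym2 (Σ v, Fin (m v)) → Bool}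
    (hblue : ∀ x v, H.Adj x.1 v → #{i | c s(x, ⟨v, i⟩) = false} ≤ d) :
    ∃ ρ : ∀ v, Fin (m v), ∀ u v, H.Adj u v → c s(⟨u, ρ u⟩, ⟨v, ρ v⟩) = true := by
  suffices ∀ s : Finset α, ∃ ρ : ∀ v, Fin (m v),
      ∀ u ∈ s, ∀ v ∈ s, H.Adj u v → c s(⟨u, ρ u⟩, ⟨v, ρ v⟩) = true by
    simpa using this univ
  intro s
  induction s using Finset.induction_on_max with
  | empty => exact ⟨fun v => ⟨0, (hm v).trans_le' (Nat.zero_le _)⟩, by simp⟩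
  | insert a s hlt ih =>
    obtain ⟨ρ, hρ⟩ := ih
    obtain ⟨i, hi⟩ := H.exists_red_in_fiber hm hblue ρ hlt
    have hupd : ∀ u ∈ s, Function.update ρ a i u = ρ u := fun u hu =>
      Function.update_of_ne (hlt u hu).ne _ _
    refine ⟨Function.update ρ a i, fun u hu v hv huv => ?_⟩
    rcases mem_insert.1 hu with rfl | hus <;> rcases mem_insert.1 hv with rfl | hvs
    · exact absurd huv (H.irrefl)
    · rw [Sym2.eq_swap, hupd v hvs, Function.update_self]
      exact hi v hvs huv.symm
    · rw [hupd u hus, Function.update_self]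
      exact hi u hus huv
    · rw [hupd u hus, hupd v hvs]
      exact hρ u hus v hvs huv

def starBlowup (n : ℕ) : SimpleGraph (Σ v, Fin (1 + (n - 1) * H.backDegree v)) :=
  H.blowup _

theorem arrowsInd_starBlowup (n : ℕ) : ArrowsInd (H.starBlowup n) H (StarGraph n) := by
  intro c
  refine or_iff_not_imp_right.2 fun hc => ?_
  have hblue : ∀ x v, H.Adj x.1 v → #{i | c s(x, ⟨v, i⟩) = false} ≤ n - 1 := by
    intro x v hxv
    have := card_blue_lt_of_not_blue_star hc x (Function.Embedding.sigmaMk v)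
      (fun _ => hxv) (fun _ _ => H.irrefl)
    rw [Fintype.card_subtype] at this
    exact Nat.le_sub_one_of_lt this
  obtain ⟨ρ, hρ⟩ := H.exists_red_transversal (fun v => Nat.lt_one_add_iff.2 le_rfl) hblue
  exact ⟨H.blowupEmbedding ρ, hρ⟩

theorem card_starBlowup_le (n : ℕ) :
    Fintype.card (Σ v, Fin (1 + (n - 1) * H.backDegree v)) ≤
      #H.edgeFinset * (n - 1) + Fintype.card α :=
  calc _ = ∑ v, (1 + (n - 1) * H.backDegree v) := by simp [Fintype.card_sigma]
    _ = Fintype.card α + (n - 1) * ∑ v, H.backDegree v := by simp [sum_add_distrib, mul_sum]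
    _ ≤ Fintype.card α + (n - 1) * #H.edgeFinset := by gcongr; exact H.sum_backDegree_le
    _ = _ := by ring

end Ordered

end SimpleGraph

theorem IR_le_edges_mul_general (k n : ℕ) (H : SimpleGraph (Fin k)) :
    IR H (StarGraph n) ≤ Nat.card H.edgeSet * (n - 1) + k := by
  classical
  calc IR H (StarGraph n) ≤ _ := IR_le_card (H.arrowsInd_starBlowup n)
    _ ≤ #H.edgeFinset * (n - 1) + Fintype.card (Fin k) := H.card_starBlowup_le n
    _ = Nat.card H.edgeSet * (n - 1) + k := by
      rw [Nat.card_eq_fintype_card, ← edgeFinset_card, Fintype.card_fin]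

/-- IR(H, K_{1,n}) ≤ |E(H)|·(n−1) + |V(H)|. -/
theorem IR_le_edges_mul (k n : ℕ) (hn : 0 < n) (H : SimpleGraph (Fin k)) :
    IR H (StarGraph n) ≤ Nat.card H.edgeSet * (n - 1) + k :=
  IR_le_edges_mul_general k n H
end

section
/- Let n be a positive integer, let H be a graph with vertices v_1, …, v_k, and for i = 2, …, k let d_i be the number of neighbours of v_i among v_1, …, v_{i−1}. Let G be the blow-up of H with pairwise disjoint parts V_1, …, V_k where |V_1| = 1 and |V_i| = (n−1)·d_i + 1 for i = 2, …, k, and with u ∈ V_i adjacent to w ∈ V_j (i ≠ j) if and only if v_i and v_j are adjacent in H. Then for every 2-coloring of the edges of G in red and blue that contains no blue star with n edges (i.e., no vertex incident to n blue edges whose other endpoints are n distinct vertices), there exist vertices u_1 ∈ V_1, …, u_k ∈ V_k such that the subgraph of G induced on {u_1, …, u_k} is isomorphic to H via u_i ↦ v_i and all of its edges are red. -/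
/-!
Choose the vertices greedily in the order `v_1, …, v_k`. A chosen vertex has fewer than `n`
blue neighbours in any part adjacent to its own, so at most `(n - 1) d_i` vertices of `V_i` are
joined in blue to an earlier chosen neighbour of `v_i`, and `|V_i| = (n - 1) d_i + 1` leaves a
vertex all of whose edges back to the chosen vertices are red.
-/

open SimpleGraph

open Finset

section RedTransversal

variable {ι : Type*} {P : ι → Type*} [∀ i, Fintype (P i)]

theorem card_blue_in_part_lt_of_not_exists_blue_star {n : ℕ} (H : SimpleGraph ι)
    (c : Sym2 (Σ i, P i) → Bool)
    (hnoblue : ¬ ∃ (v : Σ i, P i) (S : Finset (Σ i, P i)), S.card = n ∧ v ∉ S ∧ ∀ w ∈ S,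
      (H.comap (fun x : Σ i, P i => x.1)).Adj v w ∧ c s(v, w) = false)
    (v : Σ i, P i) (j : ι) (hadj : H.Adj v.1 j) :
    #{x : P j | c s(v, ⟨j, x⟩) = false} < n := by
  classical
  by_contra! hn
  obtain ⟨T, hT, hTcard⟩ := exists_subset_card_eq hn
  refine hnoblue ⟨v, T.image (Sigma.mk j), ?_, ?_, ?_⟩
  · rw [card_image_of_injective _ sigma_mk_injective, hTcard]
  · rintro hv
    obtain ⟨x, -, rfl⟩ := mem_image.1 hv
    exact H.loopless.irrefl _ hadj
  · rintro _ hw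
    obtain ⟨x, hx, rfl⟩ := mem_image.1 hw
    exact ⟨hadj, (mem_filter.1 (hT hx)).2⟩

variable [LinearOrder ι] [Fintype ι] (H : SimpleGraph ι) [DecidableRel H.Adj]
  (c : Sym2 (Σ i, P i) → Bool) (b : ℕ)
  (hblue : ∀ (v : Σ i, P i) (j : ι), H.Adj v.1 j → #{x : P j | c s(v, ⟨j, x⟩) = false} ≤ b)
  (hcard : ∀ i, b * #{j | j < i ∧ H.Adj i j} < Fintype.card (P i))
include hblue hcard

theorem exists_red_to_earlier (u : ∀ i, P i) (a : ι) :
    ∃ x : P a, ∀ j < a, H.Adj a j → c s(⟨a, x⟩, ⟨j, u j⟩) = true := by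
  classical
  let bad : Finset (P a) :=
    ({j | j < a ∧ H.Adj a j} : Finset ι).biUnion fun j => {x | c s(⟨j, u j⟩, ⟨a, x⟩) = false}
  have hbad : #bad < #(univ : Finset (P a)) :=
    calc #bad ≤ ∑ j ∈ ({j | j < a ∧ H.Adj a j} : Finset ι),
          #{x : P a | c s(⟨j, u j⟩, ⟨a, x⟩) = false} := card_biUnion_le
      _ ≤ #({j | j < a ∧ H.Adj a j} : Finset ι) * b :=
          sum_le_card_nsmul _ _ _ fun j hj => hblue ⟨j, u j⟩ a (mem_filter.1 hj).2.2.symm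
      _ < #(univ : Finset (P a)) := by rw [mul_comm, card_univ]; exact hcard a
  obtain ⟨x, -, hx⟩ := exists_mem_notMem_of_card_lt_card hbad
  refine ⟨x, fun j hj hadj => ?_⟩
  simp only [bad, mem_biUnion, mem_filter, mem_univ, true_and, not_exists, not_and] at hx
  rw [Sym2.eq_swap]
  simpa using hx j ⟨hj, hadj⟩

theorem exists_red_transversal :
    ∃ u : ∀ i, P i, ∀ i j, H.Adj i j → c s(⟨i, u i⟩, ⟨j, u j⟩) = true := by
  suffices ∀ s : Finset ι, ∃ u : ∀ i, P i, ∀ i ∈ s, ∀ j ∈ s, H.Adj i j →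
      c s(⟨i, u i⟩, ⟨j, u j⟩) = true by
    obtain ⟨u, hu⟩ := this univ
    exact ⟨u, fun i j => hu i (mem_univ i) j (mem_univ j)⟩
  have hne : ∀ i, Nonempty (P i) := fun i => Fintype.card_pos_iff.1 (Nat.zero_lt_of_lt (hcard i))
  intro s
  induction s using Finset.induction_on_max with
  | empty => exact ⟨fun i => Classical.choice (hne i), by simp⟩
  | insert a s hlt ih =>
    obtain ⟨u, hu⟩ := ih
    obtain ⟨x, hx⟩ := exists_red_to_earlier H c b hblue hcard u a
    refine ⟨Function.update u a x, ?_⟩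
    have hx' : ∀ j ∈ s, H.Adj a j → c s(⟨a, x⟩, ⟨j, Function.update u a x j⟩) = true :=
      fun j hj hadj => by rw [Function.update_of_ne (hlt j hj).ne]; exact hx j (hlt j hj) hadj
    rintro i hi j hj hadj
    rcases mem_insert.1 hi with rfl | his <;> rcases mem_insert.1 hj with rfl | hjs
    · exact absurd hadj (H.loopless.irrefl _)
    · simpa using hx' j hjs hadj
    · rw [Sym2.eq_swap]; simpa using hx' i his hadj.symm
    · rw [Function.update_of_ne (hlt i his).ne, Function.update_of_ne (hlt j hjs).ne]
      exact hu i his j hjs hadj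

end RedTransversal

theorem red_copy_in_blowup_general (n k : ℕ)
    (H : SimpleGraph (Fin k)) [DecidableRel H.Adj]
    (d : Fin k → ℕ)
    (hd : ∀ i : Fin k, d i = (Finset.univ.filter (fun j : Fin k => j < i ∧ H.Adj i j)).card)
    (m : Fin k → ℕ)
    (hm : ∀ i : Fin k, m i = if (i : ℕ) = 0 then 1 else (n - 1) * d i + 1)
    (c : Sym2 (Σ i : Fin k, Fin (m i)) → Bool)
    (hnoblue : ¬ ∃ (v : Σ i : Fin k, Fin (m i)) (S : Finset (Σ i : Fin k, Fin (m i))),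
        S.card = n ∧ v ∉ S ∧ ∀ w ∈ S,
          (H.comap (fun x : Σ i : Fin k, Fin (m i) => x.1)).Adj v w ∧ c s(v, w) = false) :
    ∃ u : Fin k → Σ i : Fin k, Fin (m i),
      (∀ i, (u i).1 = i) ∧
      (∀ i j, (H.comap (fun x : Σ i : Fin k, Fin (m i) => x.1)).Adj (u i) (u j) ↔ H.Adj i j) ∧
      (∀ i j, H.Adj i j → c s(u i, u j) = true) := by
  have hblue : ∀ (v : Σ i, Fin (m i)) j, H.Adj v.1 j → #{x | c s(v, ⟨j, x⟩) = false} ≤ n - 1 :=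
    fun v j hadj => Nat.le_sub_one_of_lt
      (card_blue_in_part_lt_of_not_exists_blue_star H c hnoblue v j hadj)
  have hcard : ∀ i, (n - 1) * #{j | j < i ∧ H.Adj i j} < Fintype.card (Fin (m i)) := by
    intro i
    rw [Fintype.card_fin, hm i, ← hd i]
    split_ifs with h0
    · have hd0 : d i = 0 := by
        rw [hd i, card_eq_zero, filter_eq_empty_iff]
        exact fun j _ hj => Nat.not_lt_zero j (h0 ▸ hj.1)
      simp [hd0]
    · omega
  obtain ⟨u, hu⟩ := exists_red_transversal H c (n - 1) hblue hcard
  exact ⟨fun i => ⟨i, u i⟩, fun i => rfl, fun i j => by simp, hu⟩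

/-- in the blow-up G of H with part sizes |V_1| = 1, |V_i| = (n-1)d_i + 1,
any red/blue coloring with no blue star with n edges contains a red induced copy of H
with the i-th vertex in the i-th part. -/
theorem red_copy_in_blowup (n k : ℕ) (hn : 0 < n)
    (H : SimpleGraph (Fin k)) [DecidableRel H.Adj]
    (d : Fin k → ℕ)
    (hd : ∀ i : Fin k, d i = (Finset.univ.filter (fun j : Fin k => j < i ∧ H.Adj i j)).card)
    (m : Fin k → ℕ)
    (hm : ∀ i : Fin k, m i = if (i : ℕ) = 0 then 1 else (n - 1) * d i + 1)
    (c : Sym2 (Σ i : Fin k, Fin (m i)) → Bool)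
    (hnoblue : ¬ ∃ (v : Σ i : Fin k, Fin (m i)) (S : Finset (Σ i : Fin k, Fin (m i))),
        S.card = n ∧ v ∉ S ∧ ∀ w ∈ S,
          (H.comap (fun x : Σ i : Fin k, Fin (m i) => x.1)).Adj v w ∧ c s(v, w) = false) :
    ∃ u : Fin k → Σ i : Fin k, Fin (m i),
      (∀ i, (u i).1 = i) ∧
      (∀ i j, (H.comap (fun x : Σ i : Fin k, Fin (m i) => x.1)).Adj (u i) (u j) ↔ H.Adj i j) ∧
      (∀ i j, H.Adj i j → c s(u i, u j) = true) :=
  red_copy_in_blowup_general n k H d hd m hm c hnoblue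
end

section
/- Let n be a positive integer and let q = ⌊√(n + 1/4) − 1/2⌋ (the largest nonnegative integer with q² + q ≤ n). Then for every graph G on at most n + q vertices there exist disjoint vertex subsets A and B of G such that every vertex of A is adjacent in G to every vertex of B, and the 2-coloring of the edges of G which colors red exactly the edges with one endpoint in A and the other endpoint in B and colors all remaining edges blue contains no blue induced star with n edges, i.e., there is no (n+1)-element vertex set S such that the subgraph of G induced on S is isomorphic to K_{1,n} and all of its edges are blue. -/
open SimpleGraph

/-- every graph on at most n + q vertices admits a complete bipartite
red part (between disjoint A and B) such that coloring those edges red and all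
other edges blue leaves no blue induced star with n edges. -/
theorem good_coloring_complete_bipartite_red (n q : ℕ) (hn : 0 < n)
    (hq1 : q ^ 2 + q ≤ n) (hq2 : n < (q + 1) ^ 2 + (q + 1))
    (k : ℕ) (hk : k ≤ n + q) (G : SimpleGraph (Fin k)) :
    ∃ A B : Finset (Fin k), Disjoint A B ∧ (∀ a ∈ A, ∀ b ∈ B, G.Adj a b) ∧
      ¬ ∃ (S : Finset (Fin k)) (v : Fin k), S.card = n + 1 ∧ v ∈ S ∧
        (∀ w ∈ S, w ≠ v → G.Adj v w ∧ ¬ ((v ∈ A ∧ w ∈ B) ∨ (v ∈ B ∧ w ∈ A))) ∧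
        (∀ w ∈ S, ∀ w' ∈ S, w ≠ v → w' ≠ v → ¬ G.Adj w w') := by
  classical
  have hq1' : q * q + q ≤ n := by rwa [pow_two] at hq1
  -- "centers": vertices that are centers of an induced K_{1,n}
  set IsC : Fin k → Prop := fun v => ∃ S : Finset (Fin k), S.card = n + 1 ∧ v ∈ S ∧
      (∀ w ∈ S, w ≠ v → G.Adj v w) ∧
      (∀ w ∈ S, ∀ w' ∈ S, w ≠ v → w' ≠ v → ¬ G.Adj w w') with hIsC
  set C : Finset (Fin k) := Finset.univ.filter IsC with hCdef
  set NN : Fin k → Finset (Fin k) :=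
    fun v => Finset.univ.filter (fun w => w ≠ v ∧ ¬ G.Adj v w) with hNNdef
  have hmemNN : ∀ u w, w ∈ NN u ↔ w ≠ u ∧ ¬ G.Adj u w := by
    intro u w; simp [hNNdef]
  have hmemC : ∀ v, v ∈ C ↔ IsC v := by intro v; simp [hCdef]
  -- Lemma 1 : a center has at least n neighbors
  have hcenter : ∀ v, IsC v → (NN v).card + (n + 1) ≤ k := by
    rintro v ⟨S, hScard, hvS, hadj, hind⟩
    have hdisj : Disjoint (NN v) S := by
      rw [Finset.disjoint_left]
      intro w hw hwS
      rw [hmemNN] at hw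
      exact hw.2 (hadj w hwS hw.1)
    calc (NN v).card + (n + 1) = (NN v ∪ S).card := by
          rw [Finset.card_union_of_disjoint hdisj, hScard]
      _ ≤ Fintype.card (Fin k) := Finset.card_le_univ _
      _ = k := Fintype.card_fin k
  -- Lemma 2 : a leaf of an induced star is never a center
  have hleaf : ∀ (v : Fin k) (S : Finset (Fin k)), S.card = n + 1 → v ∈ S →
      (∀ w ∈ S, ∀ w' ∈ S, w ≠ v → w' ≠ v → ¬ G.Adj w w') →
      ∀ w ∈ S, w ≠ v → ¬ IsC w := by
    intro v S hScard hvS hind w hwS hwv hCw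
    have hsub : (S.erase v).erase w ⊆ NN w := by
      intro x hx
      have hxw : x ≠ w := Finset.ne_of_mem_erase hx
      have hx' : x ∈ S.erase v := Finset.mem_of_mem_erase hx
      have hxv : x ≠ v := Finset.ne_of_mem_erase hx'
      have hxS : x ∈ S := Finset.mem_of_mem_erase hx'
      rw [hmemNN]
      exact ⟨hxw, hind w hwS x hxS hwv hxv⟩
    have hcard2 : ((S.erase v).erase w).card = n - 1 := by
      rw [Finset.card_erase_of_mem (Finset.mem_erase.mpr ⟨hwv, hwS⟩),
        Finset.card_erase_of_mem hvS, hScard]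
      omega
    have h1 : n - 1 ≤ (NN w).card := hcard2 ▸ Finset.card_le_card hsub
    have h2 := hcenter w hCw
    have hnq : n ≤ q ∧ 1 ≤ q := by omega
    have h3 : q ≤ q * q := Nat.le_mul_of_pos_left q (by omega)
    linarith [hnq.1, hnq.2]
  -- Lemma 3 : there are at most q centers
  have hCcard : C.card ≤ q := by
    by_cases hCne : C.Nonempty
    · obtain ⟨v, hv⟩ := hCne
      obtain ⟨S, hScard, hvS, hadj, hind⟩ := (hmemC v).mp hv
      have hdisj : Disjoint C (S.erase v) := by
        rw [Finset.disjoint_left]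
        intro u huC huS
        exact hleaf v S hScard hvS hind u (Finset.mem_of_mem_erase huS)
          (Finset.ne_of_mem_erase huS) ((hmemC u).mp huC)
      have hc : (S.erase v).card = n := by
        rw [Finset.card_erase_of_mem hvS, hScard]; omega
      have hck : C.card + n ≤ k := by
        calc C.card + n = (C ∪ S.erase v).card := by
              rw [Finset.card_union_of_disjoint hdisj, hc]
          _ ≤ Fintype.card (Fin k) := Finset.card_le_univ _
          _ = k := Fintype.card_fin k
      omega
    · simp [Finset.not_nonempty_iff_eq_empty.mp hCne]
  -- the coloring
  refine ⟨C, Finset.univ.filter (fun w => w ∉ C ∧ ∀ u ∈ C, G.Adj u w), ?_, ?_, ?_⟩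
  · rw [Finset.disjoint_left]
    intro a haC haB
    exact (Finset.mem_filter.mp haB).2.1 haC
  · intro a haC b hbB
    exact (Finset.mem_filter.mp hbB).2.2 a haC
  · rintro ⟨S, v, hScard, hvS, hblue, hind⟩
    have hvC : IsC v := ⟨S, hScard, hvS, fun w hw hwv => (hblue w hw hwv).1, hind⟩
    have hvC' : v ∈ C := (hmemC v).mpr hvC
    have hqpos : 1 ≤ q := by have := hcenter v hvC; omega
    have hsub : S.erase v ⊆ C.biUnion NN := by
      intro w hw
      have hwv : w ≠ v := Finset.ne_of_mem_erase hw
      have hwS : w ∈ S := Finset.mem_of_mem_erase hw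
      have hnred := (hblue w hwS hwv).2
      have hwnC : ¬ IsC w := hleaf v S hScard hvS hind w hwS hwv
      have hwnC' : w ∉ C := fun h => hwnC ((hmemC w).mp h)
      have hwB : ¬ (∀ u ∈ C, G.Adj u w) := by
        intro hforall
        exact hnred (Or.inl ⟨hvC', Finset.mem_filter.mpr
          ⟨Finset.mem_univ w, hwnC', hforall⟩⟩)
      push_neg at hwB
      obtain ⟨u, huC, hune⟩ := hwB
      refine Finset.mem_biUnion.mpr ⟨u, huC, ?_⟩
      rw [hmemNN]
      exact ⟨fun h => hwnC (h ▸ (hmemC u).mp huC), hune⟩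
    have hE : (S.erase v).card = n := by
      rw [Finset.card_erase_of_mem hvS, hScard]; omega
    have h1 : n ≤ (C.biUnion NN).card := hE ▸ Finset.card_le_card hsub
    have h2 : (C.biUnion NN).card ≤ C.card * (q - 1) := by
      calc (C.biUnion NN).card ≤ ∑ u ∈ C, (NN u).card := Finset.card_biUnion_le
        _ ≤ C.card * (q - 1) := by
            refine Finset.sum_le_card_nsmul C _ (q - 1) ?_
            intro u hu
            have := hcenter u ((hmemC u).mp hu)
            omega
    have h3 : C.card * (q - 1) ≤ q * (q - 1) := Nat.mul_le_mul_right _ hCcard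
    have key : q * (q - 1) + q = q * q := by
      cases q with
      | zero => simp
      | succ m => simp [Nat.succ_sub_one, Nat.mul_succ]
    linarith
end

section
/- Let n and q be positive integers with q < n, and let G be a graph on n + q vertices. Call a vertex v of G large if there is an independent set I in G with |I| ≥ n such that v is adjacent to every vertex of I (i.e., v is the center of an induced star with at least n edges). Let X be the set of large vertices of G, and suppose Y is an independent set of size exactly n such that some vertex of G is adjacent to every vertex of Y and Y together with that vertex induces a star (i.e., Y is the leaf set of an induced star with n edges). Then |X| ≤ q, and the number of vertices of Y that are not adjacent to every vertex of X is at most |X|·q. -/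
open SimpleGraph

/-- for G on n + q vertices, the set X of large vertices has size at
most q, and at most |X|·q leaves of a given large star fail to be adjacent to all of X. -/
theorem large_vertices_bound (n q : ℕ) (hn : 0 < n) (hq : 0 < q) (hqn : q < n)
    (G : SimpleGraph (Fin (n + q)))
    (X : Set (Fin (n + q)))
    (hX : X = {v : Fin (n + q) | ∃ I : Finset (Fin (n + q)), n ≤ I.card ∧
        (∀ a ∈ I, ∀ b ∈ I, a ≠ b → ¬ G.Adj a b) ∧ (∀ a ∈ I, G.Adj v a)})
    (Y : Finset (Fin (n + q))) (hYcard : Y.card = n)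
    (hYind : ∀ a ∈ Y, ∀ b ∈ Y, a ≠ b → ¬ G.Adj a b)
    (hYstar : ∃ v₀, ∀ y ∈ Y, G.Adj v₀ y) :
    X.ncard ≤ q ∧
      {y : Fin (n + q) | y ∈ Y ∧ ¬ ∀ x ∈ X, G.Adj x y}.ncard ≤ X.ncard * q := by
  classical
  have hfilter_le : ∀ x ∈ X, (Y.filter fun y => ¬ G.Adj x y).card ≤ q := by
    intro x hx
    rw [hX] at hx
    obtain ⟨I, hIcard, -, hIadj⟩ := hx
    have hsub : Y.filter (fun y => ¬ G.Adj x y) ⊆ Iᶜ := by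
      intro y hy
      simp only [Finset.mem_filter] at hy
      simp only [Finset.mem_compl]
      exact fun hyI => hy.2 (hIadj y hyI)
    have h1 := Finset.card_le_card hsub
    have h2 : Iᶜ.card = (n + q) - I.card := by
      rw [Finset.card_compl, Fintype.card_fin]
    omega
  have hXsub : X ⊆ ↑(Yᶜ) := by
    intro x hx
    simp only [Finset.coe_compl, Set.mem_compl_iff, Finset.mem_coe]
    intro hxY
    rw [hX] at hx
    obtain ⟨I, hIcard, hIind, hIadj⟩ := hx
    have hdis : Disjoint I Y := by
      rw [Finset.disjoint_left]
      intro a haI haY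
      have hadj := hIadj a haI
      have hne : x ≠ a := by rintro rfl; exact G.irrefl hadj
      exact hYind x hxY a haY hne hadj
    have hu : (I ∪ Y).card ≤ n + q := by
      have := Finset.card_le_univ (I ∪ Y)
      simpa using this
    rw [Finset.card_union_of_disjoint hdis, hYcard] at hu
    omega
  have hXle : X.ncard ≤ q := by
    have h := Set.ncard_le_ncard hXsub (Set.toFinite _)
    rwa [Set.ncard_coe_finset, Finset.card_compl, Fintype.card_fin, hYcard,
      Nat.add_sub_cancel_left] at h
  refine ⟨hXle, ?_⟩
  have hset : {y : Fin (n + q) | y ∈ Y ∧ ¬ ∀ x ∈ X, G.Adj x y} =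
      ↑(Y.filter fun y => ¬ ∀ x ∈ X, G.Adj x y) := by
    ext y; simp [Finset.mem_filter]
  rw [hset, Set.ncard_coe_finset]
  have hsub2 : (Y.filter fun y => ¬ ∀ x ∈ X, G.Adj x y) ⊆
      X.toFinset.biUnion (fun x => Y.filter fun y => ¬ G.Adj x y) := by
    intro y hy
    simp only [Finset.mem_filter] at hy
    obtain ⟨hyY, hy2⟩ := hy
    push_neg at hy2
    obtain ⟨x, hx, hnadj⟩ := hy2
    exact Finset.mem_biUnion.2 ⟨x, Set.mem_toFinset.2 hx,
      Finset.mem_filter.2 ⟨hyY, hnadj⟩⟩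
  calc (Y.filter fun y => ¬ ∀ x ∈ X, G.Adj x y).card
      ≤ _ := Finset.card_le_card hsub2
    _ ≤ ∑ x ∈ X.toFinset, (Y.filter fun y => ¬ G.Adj x y).card :=
        Finset.card_biUnion_le
    _ ≤ ∑ _x ∈ X.toFinset, q :=
        Finset.sum_le_sum (fun x hx => hfilter_le x (Set.mem_toFinset.1 hx))
    _ = X.toFinset.card * q := by rw [Finset.sum_const, smul_eq_mul]
    _ = X.ncard * q := by rw [Set.ncard_eq_toFinset_card' X]
end

section
/- Let r ≥ 2 be an integer, C > 1 a real number, and ε' a real number with 0 < ε' ≤ C^{−3}·6^{−r}. There exists n₀ ∈ ℕ (depending on r, C, ε') such that the following holds. Let X_1, …, X_r be pairwise disjoint finite sets, each of size at least n₀, with |X_1| ≥ |X_2| ≥ … ≥ |X_r| and 1/C ≤ |X_i|/|X_j| ≤ C for all i, j ∈ [r]. Suppose every pair {u, v} with u ∈ X_i, v ∈ X_j, i ≠ j, is colored yellow, pink, or white in such a way that: (i) for all 1 ≤ j < i ≤ r, every v ∈ X_i is joined by pink edges to at most (1/(r−1) − ε'·C³/(r−1))·|X_j| vertices of X_j; and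 (ii) the total number of yellow edges is at most ε'·6^{−r}·Σ_{1 ≤ i < j ≤ r} |X_i|·|X_j|. Then there exist vertices x_1 ∈ X_1, …, x_r ∈ X_r such that every pair {x_i, x_j}, i ≠ j, is colored white. -/
/-!
Choose `x_r, x_{r-1}, …, x_1` greedily. Call `v ∈ X_i` heavy if for some `j < i` it has more
than `θ|X_j|` yellow neighbours in `X_j`, where `θ = εC³/(2(r-1))`. Double counting the yellow
edges between `X_j` and `X_i` against (ii) shows that at most `2(r-1)r²6^{-r}|X_i|` vertices of
`X_i` are heavy because of `j`. By (i), a vertex of `X_i` that is not heavy has at most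
`(1 - εC³/2)|X_j|/(r-1)` non-white neighbours in each `X_j`, `j < i`. So once `x_r, …, x_{i+1}`
are chosen, at least `(i - 1 + (r - i)εC³/2)|X_i|/(r-1)` vertices of `X_i` are white to all of
them. As `2r⁴ < 6^r`, this exceeds the number `(i - 1)·2(r-1)r²6^{-r}|X_i|` of heavy vertices,
so some candidate is not heavy and can be taken as `x_i`.
-/

open Finset

theorem two_mul_pow_four_lt_six_pow (r : ℕ) : 2 * r ^ 4 < 6 ^ r := by
  rcases Nat.lt_or_ge r 2 with hr | hr
  · interval_cases r <;> norm_num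
  induction r, hr using Nat.le_induction with
  | base => norm_num
  | succ n hn ih =>
    have : 16 * (n + 1) ^ 4 ≤ 81 * n ^ 4 := by
      calc 16 * (n + 1) ^ 4 = (2 * (n + 1)) ^ 4 := by ring
        _ ≤ (3 * n) ^ 4 := Nat.pow_le_pow_left (by omega) 4
        _ = 81 * n ^ 4 := by ring
    rw [pow_succ 6 n]
    omega

theorem Finset.card_filter_lt_mul_le_sum {ι : Type*} (s : Finset ι) (f : ι → ℝ) (t : ℝ)
    (hf : ∀ i ∈ s, 0 ≤ f i) : #(s.filter fun i => t < f i) * t ≤ ∑ i ∈ s, f i := by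
  calc (#(s.filter fun i => t < f i) : ℝ) * t = ∑ i ∈ s.filter (fun i => t < f i), t := by
        rw [sum_const, nsmul_eq_mul]
    _ ≤ ∑ i ∈ s.filter (fun i => t < f i), f i := sum_le_sum fun i hi => (mem_filter.1 hi).2.le
    _ ≤ ∑ i ∈ s, f i := sum_le_sum_of_subset_of_nonneg (filter_subset _ _) fun i hi _ => hf i hi

theorem Finset.sum_card_filter_sym2_eq_card_filter_product {α : Type*} (A B : Finset α)
    (p : Sym2 α → Prop) [DecidablePred p] :
    ∑ v ∈ A, #(B.filter fun u => p s(v, u)) = #((B ×ˢ A).filter fun q => p s(q.1, q.2)) := by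
  simp only [card_filter, sum_product_right, Sym2.eq_swap]

theorem Finset.card_filter_lt_card_filter_sym2_mul_le {α : Type*} (A B : Finset α)
    (p : Sym2 α → Prop) [DecidablePred p] (t : ℝ) :
    #(A.filter fun v => t < #(B.filter fun u => p s(v, u))) * t ≤
      #((B ×ˢ A).filter fun q => p s(q.1, q.2)) := by
  rw [← sum_card_filter_sym2_eq_card_filter_product, Nat.cast_sum]
  exact card_filter_lt_mul_le_sum _ _ _ fun _ _ => Nat.cast_nonneg _

theorem Fin.sum_filter_lt_mul_le {r : ℕ} (a : Fin r → ℝ) (C : ℝ) (ha0 : ∀ i, 0 ≤ a i)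
    (ha : ∀ i j, a i ≤ C * a j) (i j : Fin r) :
    ∑ p ∈ univ.filter (fun p : Fin r × Fin r => p.1 < p.2), a p.1 * a p.2 ≤
      r ^ 2 * C ^ 2 * (a i * a j) := by
  have hcard : (#(univ.filter fun p : Fin r × Fin r => p.1 < p.2) : ℝ) ≤ r ^ 2 := by
    have := card_filter_le (univ : Finset (Fin r × Fin r)) fun p => p.1 < p.2
    rw [card_univ, Fintype.card_prod, Fintype.card_fin, ← sq] at this
    exact_mod_cast this
  have hCa : ∀ k, 0 ≤ C * a k := fun k => (ha0 k).trans (ha k k)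
  calc _ ≤ #(univ.filter fun p : Fin r × Fin r => p.1 < p.2) • (C * a i * (C * a j)) :=
        sum_le_card_nsmul _ _ _ fun p _ => mul_le_mul (ha _ _) (ha _ _) (ha0 _) (hCa i)
    _ ≤ r ^ 2 * (C * a i * (C * a j)) := by
        rw [nsmul_eq_mul]
        exact mul_le_mul_of_nonneg_right hcard (mul_nonneg (hCa i) (hCa j))
    _ = r ^ 2 * C ^ 2 * (a i * a j) := by ring

theorem card_filter_ne_two_le {α : Type*} (s : Finset α) (f : α → Fin 3) {a δ : ℝ}
    (h₁ : (#(s.filter fun u => f u = 1) : ℝ) ≤ (1 / a - δ / a) * #s)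
    (h₀ : (#(s.filter fun u => f u = 0) : ℝ) ≤ δ / (2 * a) * #s) :
    (#(s.filter fun u => ¬ f u = 2) : ℝ) ≤ (1 - δ / 2) / a * #s := by
  have hsplit : #(s.filter fun u => ¬ f u = 2) ≤
      #(s.filter fun u => f u = 1) + #(s.filter fun u => f u = 0) := by
    simp only [card_filter, ← sum_add_distrib]
    gcongr with u
    split_ifs <;> omega
  calc (#(s.filter fun u => ¬ f u = 2) : ℝ)
      ≤ #(s.filter fun u => f u = 1) + #(s.filter fun u => f u = 0) := by exact_mod_cast hsplit
    _ ≤ (1 / a - δ / a) * #s + δ / (2 * a) * #s := add_le_add h₁ h₀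
    _ = (1 - δ / 2) / a * #s := by ring

namespace GreedyTransversal

variable {α : Type*} {r : ℕ} (X : Fin r → Finset α) (W : Sym2 α → Prop) [DecidablePred W]

def candidates (x : Fin r → α) (t : ℕ) (j : Fin r) : Finset α :=
  (X j).filter fun u => ∀ i : Fin r, t ≤ i → W s(x i, u)

theorem candidates_update (x : Fin r → α) (i₀ : Fin r) (v : α) (j : Fin r) :
    candidates X W (Function.update x i₀ v) i₀ j =
      (candidates X W x (i₀ + 1 : ℕ) j).filter fun u => W s(v, u) := by
  ext u
  simp only [candidates, mem_filter, and_assoc]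
  refine and_congr_right fun _ => ⟨fun h => ⟨fun i hi => ?_, ?_⟩, fun ⟨h, hv⟩ i hi => ?_⟩
  · have hne : i ≠ i₀ := by rintro rfl; omega
    simpa [Function.update_of_ne hne] using h i (by omega)
  · simpa using h i₀ le_rfl
  · rcases eq_or_ne i i₀ with rfl | hne
    · simpa using hv
    · simpa [Function.update_of_ne hne] using h i (by have := Fin.val_ne_of_ne hne; omega)

def IsStage (L : Fin r → ℝ) (t : ℕ) (x : Fin r → α) : Prop :=
  (∀ i : Fin r, t ≤ i → x i ∈ X i) ∧
  (∀ i j : Fin r, t ≤ i → t ≤ j → i ≠ j → W s(x i, x j)) ∧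
  ∀ j : Fin r, (j : ℕ) < t → (#(X j) : ℝ) ≤ #(candidates X W x t j) + ((r : ℝ) - t) * L j

theorem isStage_top (L : Fin r → ℝ) (x : Fin r → α) : IsStage X W L r x := by
  refine ⟨fun i hi => absurd i.2 (by omega), fun i _ hi => absurd i.2 (by omega), fun j _ => ?_⟩
  have : candidates X W x r j = X j := filter_true_of_mem fun u _ i hi => absurd i.2 (by omega)
  simp [this]

variable {X W} {L : Fin r → ℝ} {B : Fin r → Finset α}

theorem IsStage.exists_update
    (hL : ∀ i j : Fin r, j < i → ∀ v ∈ X i, v ∉ B i →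
      (#((X j).filter fun u => ¬ W s(v, u)) : ℝ) ≤ L j)
    (hB : ∀ i : Fin r, (#(B i) : ℝ) + ((r : ℝ) - 1 - i) * L i < #(X i))
    {i₀ : Fin r} {x : Fin r → α} (hx : IsStage X W L (i₀ + 1 : ℕ) x) :
    ∃ v, IsStage X W L i₀ (Function.update x i₀ v) := by
  obtain ⟨hmem, hwhite, hcard⟩ := hx
  have hlt : #(B i₀) < #(candidates X W x (i₀ + 1) i₀) := by
    have hY := hcard i₀ (Nat.lt_succ_self _)
    have hB₀ := hB i₀
    push_cast at hY
    exact_mod_cast (by linarith : (#(B i₀) : ℝ) < #(candidates X W x (i₀ + 1) i₀))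
  obtain ⟨v, hvY, hvB⟩ := exists_mem_notMem_of_card_lt_card hlt
  have hvX : v ∈ X i₀ := (mem_filter.1 hvY).1
  have hvW : ∀ i : Fin r, (i₀ : ℕ) + 1 ≤ i → W s(x i, v) := (mem_filter.1 hvY).2
  have hold : ∀ i : Fin r, (i₀ : ℕ) ≤ i → i ≠ i₀ → (i₀ : ℕ) + 1 ≤ i := fun i hi hne => by
    have := Fin.val_ne_of_ne hne; omega
  refine ⟨v, fun i hi => ?_, fun i j hi hj hij => ?_, fun j hj => ?_⟩
  · rcases eq_or_ne i i₀ with rfl | hne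
    · simpa using hvX
    · simpa [Function.update_of_ne hne] using hmem i (hold i hi hne)
  · rcases eq_or_ne i i₀ with rfl | hi₀
    · rw [Function.update_self, Function.update_of_ne hij.symm, Sym2.eq_swap]
      exact hvW j (hold j hj hij.symm)
    rcases eq_or_ne j i₀ with rfl | hj₀
    · rw [Function.update_self, Function.update_of_ne hi₀]
      exact hvW i (hold i hi hi₀)
    rw [Function.update_of_ne hi₀, Function.update_of_ne hj₀]
    exact hwhite i j (hold i hi hi₀) (hold j hj hj₀) hij
  · rw [candidates_update]
    set Y := candidates X W x (i₀ + 1) j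
    have hsplit : (#(Y.filter fun u => W s(v, u)) : ℝ) + #(Y.filter fun u => ¬ W s(v, u)) = #Y := by
      exact_mod_cast card_filter_add_card_filter_not _
    have hlost : (#(Y.filter fun u => ¬ W s(v, u)) : ℝ) ≤ #((X j).filter fun u => ¬ W s(v, u)) := by
      exact_mod_cast card_le_card (filter_subset_filter _ (filter_subset _ _))
    have hnonwhite := hL i₀ j (Fin.lt_def.2 hj) v hvX hvB
    have hY := hcard j (by omega)
    push_cast at hY
    linarith

theorem exists_transversal
    (hL : ∀ i j : Fin r, j < i → ∀ v ∈ X i, v ∉ B i →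
      (#((X j).filter fun u => ¬ W s(v, u)) : ℝ) ≤ L j)
    (hB : ∀ i : Fin r, (#(B i) : ℝ) + ((r : ℝ) - 1 - i) * L i < #(X i)) :
    ∃ x : Fin r → α, (∀ i, x i ∈ X i) ∧ ∀ i j, i ≠ j → W s(x i, x j) := by
  obtain ⟨x₀⟩ : Nonempty (Fin r → α) := by
    cases r with
    | zero => infer_instance
    | succ n =>
      have h := hB (Fin.last n)
      rw [Fin.val_last, Nat.cast_succ, add_sub_cancel_right, sub_self, zero_mul, add_zero] at h
      obtain ⟨a, -, -⟩ := exists_mem_notMem_of_card_lt_card (by exact_mod_cast h)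
      exact ⟨fun _ => a⟩
  have hstage : ∀ t ≤ r, ∃ x, IsStage X W L t x := fun t ht => by
    induction ht using Nat.decreasingInduction with
    | self => exact ⟨x₀, isStage_top X W L x₀⟩
    | of_succ t ht ih =>
      obtain ⟨x, hx⟩ := ih
      exact ⟨_, (hx.exists_update (i₀ := ⟨t, ht⟩) hL hB).choose_spec⟩
  obtain ⟨x, hmem, hW, -⟩ := hstage 0 (Nat.zero_le r)
  exact ⟨x, fun i => hmem i (Nat.zero_le _), fun i j => hW i j (Nat.zero_le _) (Nat.zero_le _)⟩

end GreedyTransversal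

theorem heavy_bound_add_loss_lt {r i : ℕ} (hr : 2 ≤ r) (hi : i < r) {δ x : ℝ} (hδ : 0 < δ)
    (hx : 0 < x) :
    i * (2 * (r - 1) * r ^ 2 / 6 ^ r * x) + ((r : ℝ) - 1 - i) * ((1 - δ / 2) / (r - 1) * x)
      < x := by
  have hr1 : (1 : ℝ) ≤ r - 1 := by
    have : (2 : ℝ) ≤ r := by exact_mod_cast hr
    linarith
  have hir : (i : ℝ) ≤ r - 1 := by
    have : ((i + 1 : ℕ) : ℝ) ≤ r := by exact_mod_cast hi
    push_cast at this
    linarith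
  have hb : 2 * (r - 1) * r ^ 2 / 6 ^ r * (r - 1) < (1 : ℝ) := by
    have : (2 * r ^ 4 : ℝ) < 6 ^ r := by exact_mod_cast two_mul_pow_four_lt_six_pow r
    rw [div_mul_eq_mul_div, div_lt_one (by positivity)]
    nlinarith [sq_nonneg ((r : ℝ) - 1), sq_nonneg (r : ℝ)]
  set b : ℝ := 2 * (r - 1) * r ^ 2 / 6 ^ r
  have hscale : (i * (b * x) + ((r : ℝ) - 1 - i) * ((1 - δ / 2) / (r - 1) * x)) * (r - 1) =
      (i * (b * (r - 1)) + ((r : ℝ) - 1 - i) * (1 - δ / 2)) * x := by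
    field_simp
  -- For `i = 0` strictness comes from the slack `δ / 2`, for `i > 0` from `hb`.
  have hcoeff : i * (b * (r - 1)) + ((r : ℝ) - 1 - i) * (1 - δ / 2) < r - 1 := by
    rcases Nat.eq_zero_or_pos i with rfl | hi0
    · push_cast
      nlinarith
    · have : (1 : ℝ) ≤ i := by exact_mod_cast hi0
      nlinarith
  nlinarith

section YellowPinkWhite

variable {α : Type*} {r : ℕ} {C ε : ℝ} {X : Fin r → Finset α} {c : Sym2 α → Fin 3}

theorem card_yellow_product_le (hε : 0 ≤ ε)
    (hratio : ∀ i j : Fin r, (#(X i) : ℝ) ≤ C * #(X j))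
    (hyellow : ∑ p ∈ univ.filter (fun p : Fin r × Fin r => p.1 < p.2),
          (#(((X p.1) ×ˢ (X p.2)).filter fun q => c s(q.1, q.2) = 0) : ℝ)
        ≤ ε * (6 : ℝ) ^ (-(r : ℤ)) *
            ∑ p ∈ univ.filter (fun p : Fin r × Fin r => p.1 < p.2), (#(X p.1) : ℝ) * #(X p.2))
    {i j : Fin r} (hji : j < i) :
    (#((X j ×ˢ X i).filter fun q => c s(q.1, q.2) = 0) : ℝ) ≤
      ε * (6 : ℝ) ^ (-(r : ℤ)) * (r ^ 2 * C ^ 2 * (#(X j) * #(X i))) := by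
  have hsingle := single_le_sum (f := fun p : Fin r × Fin r =>
      (#(((X p.1) ×ˢ (X p.2)).filter fun q => c s(q.1, q.2) = 0) : ℝ))
      (s := univ.filter fun p : Fin r × Fin r => p.1 < p.2) (fun _ _ => Nat.cast_nonneg _)
      (mem_filter.2 ⟨mem_univ (j, i), hji⟩)
  have hsum := Fin.sum_filter_lt_mul_le (fun k => (#(X k) : ℝ)) C (fun _ => Nat.cast_nonneg _)
    hratio j i
  exact hsingle.trans (hyellow.trans (mul_le_mul_of_nonneg_left hsum (by positivity)))

noncomputable def yellowHeavyAt (θ : ℝ) (X : Fin r → Finset α) (c : Sym2 α → Fin 3)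
    (i j : Fin r) : Finset α :=
  (X i).filter fun v => θ * #(X j) < #((X j).filter fun u => c s(v, u) = 0)

noncomputable def yellowHeavy [DecidableEq α] (θ : ℝ) (X : Fin r → Finset α)
    (c : Sym2 α → Fin 3) (i : Fin r) : Finset α :=
  (Iio i).biUnion (yellowHeavyAt θ X c i)

theorem card_yellowHeavyAt_le (hC : 1 < C) (hε : 0 < ε) {i j : Fin r} (hji : j < i)
    (hXj : (X j).Nonempty)
    (hpair : (#((X j ×ˢ X i).filter fun q => c s(q.1, q.2) = 0) : ℝ) ≤
      ε * (6 : ℝ) ^ (-(r : ℤ)) * (r ^ 2 * C ^ 2 * (#(X j) * #(X i)))) :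
    (#(yellowHeavyAt (ε * C ^ 3 / (2 * (r - 1))) X c i j) : ℝ) ≤
      2 * (r - 1) * r ^ 2 / 6 ^ r * #(X i) := by
  set H := yellowHeavyAt (ε * C ^ 3 / (2 * (r - 1))) X c i j
  have hr : (0 : ℝ) < r - 1 := by
    have := Fin.lt_def.1 hji
    have : (1 : ℝ) < r := by exact_mod_cast (by omega : 1 < r)
    linarith
  have hK : 0 < ε * C ^ 2 * #(X j) := by
    have : (0 : ℝ) < #(X j) := by exact_mod_cast hXj.card_pos
    positivity
  have hheavy : #H * (ε * C ^ 3 / (2 * (r - 1)) * #(X j)) ≤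
      (#((X j ×ˢ X i).filter fun q => c s(q.1, q.2) = 0) : ℝ) :=
    card_filter_lt_card_filter_sym2_mul_le (X i) (X j) (fun e => c e = 0) _
  have hmul : #H * C * (ε * C ^ 2 * #(X j)) ≤
      2 * (r - 1) * r ^ 2 / 6 ^ r * #(X i) * (ε * C ^ 2 * #(X j)) :=
    calc #H * C * (ε * C ^ 2 * #(X j))
        = #H * (ε * C ^ 3 / (2 * (r - 1)) * #(X j)) * (2 * (r - 1)) := by
          field_simp
      _ ≤ ε * (6 : ℝ) ^ (-(r : ℤ)) * (r ^ 2 * C ^ 2 * (#(X j) * #(X i))) * (2 * (r - 1)) :=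
          mul_le_mul_of_nonneg_right (hheavy.trans hpair) (by positivity)
      _ = 2 * (r - 1) * r ^ 2 / 6 ^ r * #(X i) * (ε * C ^ 2 * #(X j)) := by
          rw [zpow_neg, zpow_natCast]
          field_simp
  calc (#H : ℝ) ≤ #H * C := le_mul_of_one_le_right (Nat.cast_nonneg _) hC.le
    _ ≤ _ := le_of_mul_le_mul_right hmul hK

theorem card_yellowHeavy_le [DecidableEq α] (hC : 1 < C) (hε : 0 < ε) (i : Fin r)
    (hX : ∀ j, (X j).Nonempty)
    (hpair : ∀ j < i, (#((X j ×ˢ X i).filter fun q => c s(q.1, q.2) = 0) : ℝ) ≤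
      ε * (6 : ℝ) ^ (-(r : ℤ)) * (r ^ 2 * C ^ 2 * (#(X j) * #(X i)))) :
    (#(yellowHeavy (ε * C ^ 3 / (2 * (r - 1))) X c i) : ℝ) ≤
      i * (2 * (r - 1) * r ^ 2 / 6 ^ r * #(X i)) :=
  calc (#(yellowHeavy (ε * C ^ 3 / (2 * (r - 1))) X c i) : ℝ)
      ≤ ∑ j ∈ Iio i, (#(yellowHeavyAt (ε * C ^ 3 / (2 * (r - 1))) X c i j) : ℝ) := by
        exact_mod_cast card_biUnion_le
    _ ≤ #(Iio i) • (2 * (r - 1) * r ^ 2 / 6 ^ r * #(X i)) :=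
        sum_le_card_nsmul _ _ _ fun j hj =>
          card_yellowHeavyAt_le hC hε (mem_Iio.1 hj) (hX j) (hpair j (mem_Iio.1 hj))
    _ = i * (2 * (r - 1) * r ^ 2 / 6 ^ r * #(X i)) := by rw [Fin.card_Iio, nsmul_eq_mul]

end YellowPinkWhite

/-- Colors of pairs are given by `c : Sym2 α → Fin 3`, with yellow = 0, pink = 1, white = 2. -/
theorem yellow_pink_white_general (r : ℕ) (hr : 2 ≤ r) (C : ℝ) (hC : 1 < C)
    (ε : ℝ) (hε0 : 0 < ε) :
    ∃ n₀ : ℕ, ∀ (α : Type) [DecidableEq α] (X : Fin r → Finset α),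
      (∀ i j : Fin r, i ≠ j → Disjoint (X i) (X j)) →
      (∀ i : Fin r, n₀ ≤ (X i).card) →
      (∀ i j : Fin r, i ≤ j → (X j).card ≤ (X i).card) →
      (∀ i j : Fin r, ((X i).card : ℝ) ≤ C * ((X j).card : ℝ)) →
      ∀ c : Sym2 α → Fin 3,
      (∀ i j : Fin r, j < i → ∀ v ∈ X i,
        ((((X j).filter (fun u => c s(v, u) = 1)).card : ℝ)
          ≤ (1 / ((r : ℝ) - 1) - ε * C ^ 3 / ((r : ℝ) - 1)) * ((X j).card : ℝ))) →
      ((∑ p ∈ Finset.univ.filter (fun p : Fin r × Fin r => p.1 < p.2),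
          ((((X p.1) ×ˢ (X p.2)).filter (fun q => c s(q.1, q.2) = 0)).card : ℝ))
        ≤ ε * (6 : ℝ) ^ (-(r : ℤ)) *
            ∑ p ∈ Finset.univ.filter (fun p : Fin r × Fin r => p.1 < p.2),
              ((X p.1).card : ℝ) * ((X p.2).card : ℝ)) →
      ∃ x : Fin r → α, (∀ i, x i ∈ X i) ∧ ∀ i j : Fin r, i ≠ j → c s(x i, x j) = 2 := by
  refine ⟨1, fun α _ X _ hcard _ hratio c hpink hyellow => ?_⟩
  have hX : ∀ i, (X i).Nonempty := fun i => card_pos.1 (hcard i)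
  -- The yellow threshold takes half of the slack `εC³/(r-1)` that (i) leaves below `1/(r-1)`;
  -- the other half keeps `L j` strictly below `|X j|/(r-1)`, which the last step (in `X 0`) needs.
  refine GreedyTransversal.exists_transversal (W := fun e => c e = 2)
    (L := fun j => (1 - ε * C ^ 3 / 2) / (r - 1) * #(X j))
    (B := yellowHeavy (ε * C ^ 3 / (2 * (r - 1))) X c) (fun i j hji v hv hvB => ?_) fun i => ?_
  · refine card_filter_ne_two_le (X j) (fun u => c s(v, u)) (hpink i j hji v hv) ?_
    exact not_lt.1 fun h => hvB (mem_biUnion.2 ⟨j, mem_Iio.2 hji, mem_filter.2 ⟨hv, h⟩⟩)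
  · calc _ ≤ i * (2 * (r - 1) * r ^ 2 / 6 ^ r * #(X i)) +
          ((r : ℝ) - 1 - i) * ((1 - ε * C ^ 3 / 2) / (r - 1) * #(X i)) := by
          gcongr
          exact card_yellowHeavy_le hC hε0 i hX fun j hji =>
            card_yellow_product_le hε0.le hratio hyellow hji
      _ < #(X i) :=
          heavy_bound_add_loss_lt hr i.2 (by positivity) (by exact_mod_cast (hX i).card_pos)

/-- the yellow/pink/white lemma. Colors of pairs are given by
`c : Sym2 α → Fin 3`, with yellow = 0, pink = 1, white = 2. -/
theorem yellow_pink_white (r : ℕ) (hr : 2 ≤ r) (C : ℝ) (hC : 1 < C)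
    (ε : ℝ) (hε0 : 0 < ε) (hε1 : ε ≤ C ^ (-3 : ℤ) * (6 : ℝ) ^ (-(r : ℤ))) :
    ∃ n₀ : ℕ, ∀ (α : Type) [DecidableEq α] (X : Fin r → Finset α),
      (∀ i j : Fin r, i ≠ j → Disjoint (X i) (X j)) →
      (∀ i : Fin r, n₀ ≤ (X i).card) →
      (∀ i j : Fin r, i ≤ j → (X j).card ≤ (X i).card) →
      (∀ i j : Fin r, ((X i).card : ℝ) ≤ C * ((X j).card : ℝ)) →
      ∀ c : Sym2 α → Fin 3,
      (∀ i j : Fin r, j < i → ∀ v ∈ X i,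
        ((((X j).filter (fun u => c s(v, u) = 1)).card : ℝ)
          ≤ (1 / ((r : ℝ) - 1) - ε * C ^ 3 / ((r : ℝ) - 1)) * ((X j).card : ℝ))) →
      ((∑ p ∈ Finset.univ.filter (fun p : Fin r × Fin r => p.1 < p.2),
          ((((X p.1) ×ˢ (X p.2)).filter (fun q => c s(q.1, q.2) = 0)).card : ℝ))
        ≤ ε * (6 : ℝ) ^ (-(r : ℤ)) *
            ∑ p ∈ Finset.univ.filter (fun p : Fin r × Fin r => p.1 < p.2),
              ((X p.1).card : ℝ) * ((X p.2).card : ℝ)) →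
      ∃ x : Fin r → α, (∀ i, x i ∈ X i) ∧ ∀ i j : Fin r, i ≠ j → c s(x i, x j) = 2 :=
  yellow_pink_white_general r hr C hC ε hε0
end

section
/- There exists a₀ ∈ ℕ such that for every integer a ≥ a₀ the following holds. Set b = a² and ε = a^{−1/2}, let X be a set of size b, and let m be any integer with m ≥ ε·b/(1 + 2ε). Then for every m-element subset X'' of X, the number of (b−a)-element subsets of X that contain X'' is strictly less than (ε/(1 + 2ε))·C(b, b−a), where C(b, b−a) is the total number of (b−a)-element subsets of X. -/
/-!
A `k`-set containing the `m`-set `X''` is determined by its part outside `X''`, so there are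
`C(b - m, k - m)` of them, and `C(b - m, k - m) / C(b, k) = C(k, m) / C(b, m) ≤ (k / b) ^ m`.
For `k = b - a` and `s = √a` this ratio is at most `(1 - 1/a) ^ m ≤ exp (-m / a)`, while
`ε / (1 + 2ε) = 1 / (s + 2)` and the hypothesis on `m` gives `m / a ≥ s² / (s + 2)`;
finally `s + 2 < exp (s² / (s + 2))` once `s ≥ 5`.
-/

open Finset

namespace Nat

theorem descFactorial_mul_pow_le_descFactorial_mul_pow {k b : ℕ} (hkb : k ≤ b) (m : ℕ) :
    k.descFactorial m * b ^ m ≤ b.descFactorial m * k ^ m := by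
  induction m with
  | zero => simp
  | succ m ih =>
    have step : (k - m) * b ≤ (b - m) * k := by
      rw [Nat.sub_mul, Nat.sub_mul, mul_comm k b]
      exact Nat.sub_le_sub_left (Nat.mul_le_mul_left m hkb) _
    calc k.descFactorial (m + 1) * b ^ (m + 1)
        = ((k - m) * b) * (k.descFactorial m * b ^ m) := by rw [descFactorial_succ]; ring
      _ ≤ ((b - m) * k) * (b.descFactorial m * k ^ m) := Nat.mul_le_mul step ih
      _ = b.descFactorial (m + 1) * k ^ (m + 1) := by rw [descFactorial_succ]; ring

theorem choose_mul_pow_le_choose_mul_pow {k b : ℕ} (hkb : k ≤ b) (m : ℕ) :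
    k.choose m * b ^ m ≤ b.choose m * k ^ m := by
  have h := descFactorial_mul_pow_le_descFactorial_mul_pow hkb m
  rw [descFactorial_eq_factorial_mul_choose, descFactorial_eq_factorial_mul_choose,
    mul_assoc, mul_assoc] at h
  exact Nat.le_of_mul_le_mul_left h (factorial_pos m)

theorem choose_sub_mul_pow_le_choose_mul_pow {m k b : ℕ} (hmk : m ≤ k) (hkb : k ≤ b) :
    (b - m).choose (k - m) * b ^ m ≤ b.choose k * k ^ m := by
  refine Nat.le_of_mul_le_mul_left ?_ (choose_pos (hmk.trans hkb))
  calc b.choose m * ((b - m).choose (k - m) * b ^ m)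
      = b.choose k * (k.choose m * b ^ m) := by rw [← mul_assoc, ← choose_mul hmk]; ring
    _ ≤ b.choose k * (b.choose m * k ^ m) :=
        Nat.mul_le_mul_left _ (choose_mul_pow_le_choose_mul_pow hkb m)
    _ = b.choose m * (b.choose k * k ^ m) := by ring

end Nat

namespace Finset

theorem card_filter_powersetCard_subset_mul_pow_le {α : Type*} [DecidableEq α]
    {s t : Finset α} {n : ℕ} (hst : s ⊆ t) (hnt : n ≤ #t) :
    #{u ∈ t.powersetCard n | s ⊆ u} * #t ^ #s ≤ (#t).choose n * n ^ #s := by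
  by_cases hsn : #s ≤ n
  · rw [card_filter_powersetCard_subset s t n hst hsn]
    exact Nat.choose_sub_mul_pow_le_choose_mul_pow hsn hnt
  · have hempty : {u ∈ t.powersetCard n | s ⊆ u} = ∅ := filter_eq_empty_iff.2 fun u hu hsu =>
      hsn ((card_le_card hsu).trans (mem_powersetCard.1 hu).2.le)
    simp [hempty]

end Finset

namespace Real

theorem add_two_lt_exp_sq_div {s : ℝ} (hs : 5 ≤ s) : s + 2 < exp (s ^ 2 / (s + 2)) := by
  have hlow : s - 2 ≤ s ^ 2 / (s + 2) := by
    rw [le_div_iff₀ (by linarith)]; nlinarith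
  calc s + 2 < 1 + (s - 2) + (s - 2) ^ 2 / 2 := by nlinarith
    _ ≤ exp (s - 2) := quadratic_le_exp_of_nonneg (by linarith)
    _ ≤ exp (s ^ 2 / (s + 2)) := exp_le_exp.2 hlow

theorem one_sub_inv_sq_pow_lt {s : ℝ} {m : ℕ} (hs : 5 ≤ s) (hm : s ^ 4 / (s + 2) ≤ m) :
    (1 - 1 / s ^ 2) ^ m < (s + 2)⁻¹ := by
  have hs2 : 0 < s ^ 2 := by positivity
  have hexp : s ^ 2 / (s + 2) ≤ m / s ^ 2 := by
    rw [le_div_iff₀ hs2, div_mul_eq_mul_div, ← pow_add]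
    exact hm
  calc (1 - 1 / s ^ 2) ^ m ≤ exp (-(1 / s ^ 2)) ^ m :=
        pow_le_pow_left₀ (by rw [sub_nonneg, div_le_one hs2]; nlinarith) (one_sub_le_exp_neg _) m
    _ = (exp (m / s ^ 2))⁻¹ := by rw [← exp_nat_mul, ← exp_neg]; congr 1; ring
    _ < (s + 2)⁻¹ :=
        inv_strictAnti₀ (by linarith) ((add_two_lt_exp_sq_div hs).trans_le (exp_le_exp.2 hexp))

end Real

/-- with b = a², ε = a^{-1/2}, for any m ≥ ε·b/(1+2ε) and any
m-element subset X'' of a b-element set X, the number of (b−a)-element subsets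
of X containing X'' is less than (ε/(1+2ε))·C(b, b−a). -/
theorem counting_subsets_containing :
    ∃ a₀ : ℕ, ∀ a : ℕ, a₀ ≤ a →
      ∀ b : ℕ, b = a ^ 2 → ∀ ε : ℝ, ε = (a : ℝ) ^ (-(1 / 2 : ℝ)) →
      ∀ (α : Type) [DecidableEq α] (X : Finset α), X.card = b →
      ∀ m : ℕ, ε * (b : ℝ) / (1 + 2 * ε) ≤ (m : ℝ) →
      ∀ X'' : Finset α, X'' ⊆ X → X''.card = m →
      ((((X.powersetCard (b - a)).filter (fun S => X'' ⊆ S)).card : ℝ)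
        < (ε / (1 + 2 * ε)) * (Nat.choose b (b - a) : ℝ)) := by
  refine ⟨25, fun a ha b hb ε hε α _ X hX m hm X'' hX''X hX'' => ?_⟩
  set s := √(a : ℝ)
  have hs : 5 ≤ s :=
    (Real.le_sqrt (by norm_num) (Nat.cast_nonneg a)).2 (by norm_num; exact_mod_cast ha)
  have hsa : s ^ 2 = a := Real.sq_sqrt (Nat.cast_nonneg a)
  have hεs : ε = s⁻¹ := by rw [hε, Real.rpow_neg (Nat.cast_nonneg _), ← Real.sqrt_eq_rpow]
  have hbs : (b : ℝ) = s ^ 4 := by rw [hb, Nat.cast_pow, ← hsa]; ring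
  have hab : a ≤ b := hb ▸ Nat.le_self_pow two_ne_zero a
  have hfrac : ε / (1 + 2 * ε) = (s + 2)⁻¹ := by rw [hεs]; field_simp
  have hm' : s ^ 4 / (s + 2) ≤ m := by
    rwa [mul_comm, mul_div_assoc, hfrac, hbs, ← div_eq_mul_inv] at hm
  have hratio : ((b - a : ℕ) : ℝ) / b = 1 - 1 / s ^ 2 := by
    rw [Nat.cast_sub hab, hbs, ← hsa]; field_simp
  have hcount := card_filter_powersetCard_subset_mul_pow_le hX''X (hX ▸ Nat.sub_le b a)
  rw [hX, hX''] at hcount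
  have hb0 : (0 : ℝ) < b := by rw [hbs]; positivity
  calc (#{S ∈ X.powersetCard (b - a) | X'' ⊆ S} : ℝ)
      ≤ b.choose (b - a) * (((b - a : ℕ) : ℝ) / b) ^ m := by
        rw [div_pow, mul_div_assoc', le_div_iff₀ (by positivity)]
        exact_mod_cast hcount
    _ < b.choose (b - a) * (s + 2)⁻¹ := by
        rw [hratio]
        exact mul_lt_mul_of_pos_left (Real.one_sub_inv_sq_pow_lt hs hm')
          (by exact_mod_cast Nat.choose_pos (Nat.sub_le b a))
    _ = ε / (1 + 2 * ε) * b.choose (b - a) := by rw [hfrac, mul_comm]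
end
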